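/- arXiv:math/0208193 — 7 statements merged into one kernel-verified Lean document; each statement's English description precedes it below -/
import Mathlib

section
/- Let X be a (real or complex) Banach space, let c > 1 be a real number, and let (x_n)_{n≥1} be a sequence in X such that ‖x_n‖ ≥ c^n for all n ≥ 1. Then 0 does not belong to the closure of the set {x_n : n ≥ 1} in the weak topology of X. -/
/-!
Choose `m` with `c ^ m ≥ 3`. Along each residue class of `n` modulo `m` the norms grow at least
like `C ^ j` with `C = c ^ m ≥ 3`, and for such a sequence `y` there is a single functional `f`
with `‖f (y j)‖ ≥ 1/2` for all `j`; the `m` functionals so obtained cut out a weak neighbourhood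
of `0` containing no `x n`. The functional is the series `∑ ± C⁻ʲ g j`, where `g j` norms `y j`
and the signs are chosen greedily, so that at `y j` the `j`-th partial sum is at least as large
as its last term `C⁻ʲ ‖y j‖`, while the tail after `j` contributes at most half of that because
`C ≥ 3`.
-/

section GreedySigns

variable {𝕜 X F : Type*} [RCLike 𝕜] [NormedAddCommGroup X] [NormedSpace 𝕜 X]
  [NormedAddCommGroup F] [NormedSpace 𝕜 F]

noncomputable def alignSign (z : F) (φ : X →L[𝕜] F) (v : X) : X →L[𝕜] F :=
  if ‖φ v‖ ≤ ‖z + φ v‖ then φ else -φ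

theorem norm_alignSign (z : F) (φ : X →L[𝕜] F) (v : X) : ‖alignSign z φ v‖ = ‖φ‖ := by
  unfold alignSign
  split_ifs <;> simp

theorem norm_apply_le_norm_add_alignSign_apply (z : F) (φ : X →L[𝕜] F) (v : X) :
    ‖φ v‖ ≤ ‖z + alignSign z φ v v‖ := by
  unfold alignSign
  split_ifs with h
  · exact h
  · have h2 : ‖(z + φ v) - (z - φ v)‖ = 2 * ‖φ v‖ := by
      rw [add_sub_sub_cancel, ← two_smul 𝕜, norm_smul, RCLike.norm_two]
    rw [neg_apply, ← sub_eq_add_neg]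
    linarith [norm_sub_le (z + φ v) (z - φ v)]

noncomputable def greedySum (φ : ℕ → X →L[𝕜] F) (y : ℕ → X) : ℕ → X →L[𝕜] F
  | 0 => 0
  | n + 1 => greedySum φ y n + alignSign (greedySum φ y n (y n)) (φ n) (y n)

variable (φ : ℕ → X →L[𝕜] F) (y : ℕ → X)

theorem norm_greedySum_succ_sub (n : ℕ) :
    ‖greedySum φ y (n + 1) - greedySum φ y n‖ = ‖φ n‖ := by
  rw [greedySum, add_sub_cancel_left, norm_alignSign]

theorem norm_apply_le_norm_greedySum_succ_apply (n : ℕ) :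
    ‖φ n (y n)‖ ≤ ‖greedySum φ y (n + 1) (y n)‖ :=
  norm_apply_le_norm_add_alignSign_apply _ _ _

theorem exists_forall_norm_apply_sub_tsum_mul_le [CompleteSpace F]
    (hφ : Summable fun k ↦ ‖φ k‖) :
    ∃ f : X →L[𝕜] F, ∀ n, ‖φ n (y n)‖ - (∑' k, ‖φ (k + (n + 1))‖) * ‖y n‖ ≤ ‖f (y n)‖ := by
  set ψ : ℕ → X →L[𝕜] F := fun k ↦ greedySum φ y (k + 1) - greedySum φ y k
  have hψ : ∀ k, ‖ψ k‖ = ‖φ k‖ := norm_greedySum_succ_sub φ y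
  have hψ_summable : Summable fun k ↦ ‖ψ k‖ := by simpa only [hψ] using hφ
  refine ⟨∑' k, ψ k, fun n ↦ ?_⟩
  set R := ∑' k, ψ (k + (n + 1))
  have h_split : ∑' k, ψ k = greedySum φ y (n + 1) + R := by
    rw [← (hψ_summable.of_norm).sum_add_tsum_nat_add (n + 1), Finset.sum_range_sub, greedySum,
      sub_zero]
  have hR : ‖R‖ ≤ ∑' k, ‖φ (k + (n + 1))‖ := by
    simpa only [hψ] using
      norm_tsum_le_tsum_norm ((summable_nat_add_iff (f := fun k ↦ ‖ψ k‖) (n + 1)).2 hψ_summable)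
  have h_tail : ‖R (y n)‖ ≤ (∑' k, ‖φ (k + (n + 1))‖) * ‖y n‖ :=
    (R.le_opNorm (y n)).trans (mul_le_mul_of_nonneg_right hR (norm_nonneg _))
  rw [h_split, add_apply]
  linarith [norm_apply_le_norm_greedySum_succ_apply φ y n,
    norm_le_add_norm_add (greedySum φ y (n + 1) (y n)) (R (y n))]

end GreedySigns

section WeakClosure

variable {𝕜 X : Type*} [NontriviallyNormedField 𝕜] [NormedAddCommGroup X] [NormedSpace 𝕜 X]

theorem zero_notMem_closure_of_forall_exists_le_norm_apply {ι : Type*} [Finite ι]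
    (f : ι → StrongDual 𝕜 X) {δ : ℝ} (hδ : 0 < δ) {s : Set (WeakSpace 𝕜 X)}
    (hs : ∀ y ∈ s, ∃ i, δ ≤ ‖f i ((toWeakSpace 𝕜 X).symm y)‖) :
    (0 : WeakSpace 𝕜 X) ∉ closure s := by
  set U := ⋂ i, {y : WeakSpace 𝕜 X | ‖f i ((toWeakSpace 𝕜 X).symm y)‖ < δ}
  have hU_open : IsOpen U := isOpen_iInter_of_finite fun i ↦
    isOpen_lt (WeakBilin.eval_continuous _ (f i)).norm continuous_const
  have h0U : (0 : WeakSpace 𝕜 X) ∈ U := by simp [U, hδ]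
  intro h0
  obtain ⟨y, hyU, hys⟩ := mem_closure_iff.1 h0 U hU_open h0U
  obtain ⟨i, hi⟩ := hs y hys
  exact (Set.mem_iInter.1 hyU i).not_ge hi

end WeakClosure

section FastGrowth

variable {𝕜 X : Type*} [RCLike 𝕜] [NormedAddCommGroup X] [NormedSpace 𝕜 X]

theorem exists_forall_half_le_norm_apply_of_pow_le_norm {C : ℝ} (hC : 3 ≤ C) {y : ℕ → X}
    (hy : ∀ j, C ^ j ≤ ‖y j‖) : ∃ f : StrongDual 𝕜 X, ∀ j, 1 / 2 ≤ ‖f (y j)‖ := by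
  set r := C⁻¹
  have hr0 : 0 < r := by positivity
  have hr : 3 * r ≤ 1 := by
    rw [← div_eq_mul_inv, div_le_one (by positivity)]; exact hC
  have hr1 : r < 1 := by linarith
  choose g hg_norm hg_apply using fun j ↦ exists_dual_vector'' 𝕜 (y j)
  set φ : ℕ → StrongDual 𝕜 X := fun j ↦ ((r ^ j : ℝ) : 𝕜) • g j
  have hφ_norm : ∀ j, ‖φ j‖ ≤ r ^ j := fun j ↦ by
    rw [norm_smul, RCLike.norm_ofReal, abs_of_pos (by positivity)]
    exact mul_le_of_le_one_right (by positivity) (hg_norm j)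
  have hφ_apply : ∀ j, ‖φ j (y j)‖ = r ^ j * ‖y j‖ := fun j ↦ by
    simp [φ, hg_apply, abs_of_pos hr0]
  have hgeom : Summable fun k ↦ r ^ k := summable_geometric_of_lt_one hr0.le hr1
  have hφ_summable : Summable fun k ↦ ‖φ k‖ :=
    hgeom.of_nonneg_of_le (fun _ ↦ norm_nonneg _) hφ_norm
  obtain ⟨f, hf⟩ := exists_forall_norm_apply_sub_tsum_mul_le φ y hφ_summable
  refine ⟨f, fun j ↦ ?_⟩
  have h_tail : ∑' k, ‖φ (k + (j + 1))‖ ≤ r ^ j / 2 := calc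
    _ ≤ ∑' k, r ^ (k + (j + 1)) :=
      Summable.tsum_le_tsum (fun k ↦ hφ_norm _)
        ((summable_nat_add_iff (f := fun k ↦ ‖φ k‖) (j + 1)).2 hφ_summable)
        ((summable_nat_add_iff (f := fun k ↦ r ^ k) (j + 1)).2 hgeom)
    _ = r ^ (j + 1) / (1 - r) := by
      simp_rw [pow_add]
      rw [tsum_mul_right, tsum_geometric_of_lt_one hr0.le hr1]
      ring
    _ ≤ r ^ j / 2 := by
      rw [div_le_div_iff₀ (by linarith) two_pos, pow_succ]
      nlinarith [pow_pos hr0 j]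
  have h_one : 1 ≤ r ^ j * ‖y j‖ := calc
    1 = r ^ j * C ^ j := by rw [← mul_pow, inv_mul_cancel₀ (by positivity), one_pow]
    _ ≤ r ^ j * ‖y j‖ := by gcongr; exact hy j
  calc 1 / 2 ≤ r ^ j * ‖y j‖ - r ^ j / 2 * ‖y j‖ := by linarith
    _ ≤ ‖φ j (y j)‖ - (∑' k, ‖φ (k + (j + 1))‖) * ‖y j‖ := by rw [hφ_apply]; gcongr
    _ ≤ ‖f (y j)‖ := hf j

end FastGrowth

theorem stmt_0_general {𝕜 : Type*} [RCLike 𝕜] {X : Type*} [NormedAddCommGroup X]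
    [NormedSpace 𝕜 X] {c : ℝ} (hc : 1 < c) (x : ℕ → X)
    (hx : ∀ n : ℕ, 1 ≤ n → c ^ n ≤ ‖x n‖) :
    (0 : WeakSpace 𝕜 X) ∉
      closure {y : WeakSpace 𝕜 X | ∃ n : ℕ, 1 ≤ n ∧ y = toWeakSpace 𝕜 X (x n)} := by
  obtain ⟨m, hm⟩ := pow_unbounded_of_one_lt 3 hc
  have hm0 : 0 < m := Nat.pos_of_ne_zero (by rintro rfl; norm_num at hm)
  have h_class : ∀ i : Fin m, ∃ f : StrongDual 𝕜 X, ∀ j, 1 / 2 ≤ ‖f (x (i + 1 + m * j))‖ :=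
    fun i ↦ exists_forall_half_le_norm_apply_of_pow_le_norm hm.le fun j ↦ calc
      (c ^ m) ^ j ≤ c ^ (i + 1 + m * j) := by
        rw [← pow_mul]; exact pow_le_pow_right₀ hc.le (by omega)
      _ ≤ ‖x _‖ := hx _ (by omega)
  choose f hf using h_class
  refine zero_notMem_closure_of_forall_exists_le_norm_apply f one_half_pos ?_
  rintro _ ⟨n, hn, rfl⟩
  have hn_eq : (n - 1) % m + 1 + m * ((n - 1) / m) = n := by
    have := Nat.mod_add_div (n - 1) m; omega
  refine ⟨⟨(n - 1) % m, Nat.mod_lt _ hm0⟩, ?_⟩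
  simpa [hn_eq] using hf ⟨(n - 1) % m, Nat.mod_lt _ hm0⟩ ((n - 1) / m)

/-- Let `X` be a Banach space over `𝕜 = ℝ` or `ℂ`, let `c > 1`, and let `(x_n)_{n ≥ 1}` be a
sequence in `X` with `‖x n‖ ≥ c ^ n` for all `n ≥ 1`. Then `0` is not in the weak closure of
`{x_n : n ≥ 1}`. -/
theorem stmt_0 {𝕜 : Type*} [RCLike 𝕜] {X : Type*} [NormedAddCommGroup X]
    [NormedSpace 𝕜 X] [CompleteSpace X] {c : ℝ} (hc : 1 < c) (x : ℕ → X)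
    (hx : ∀ n : ℕ, 1 ≤ n → c ^ n ≤ ‖x n‖) :
    (0 : WeakSpace 𝕜 X) ∉
      closure {y : WeakSpace 𝕜 X | ∃ n : ℕ, 1 ≤ n ∧ y = toWeakSpace 𝕜 X (x n)} :=
  stmt_0_general hc x hx
end

section
/- Let X be a Banach space, let c > 1, and let (x_n)_{n≥1} be a sequence in X with ‖x_n‖ ≥ c^n for all n ≥ 1. Then there exist a positive integer N and continuous linear functionals F_1, …, F_N ∈ X* such that max_{1 ≤ k ≤ N} |F_k(x_n)| ≥ 1 for every n ≥ 1. -/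
/-!
Choose `N` with `c ^ N > 2` and split the indices into residue classes modulo `N`; along each
class the norms grow at least like `r ^ j` with `r = c ^ N > 2`. For such a sequence `y` a single
functional suffices: take `F = ∑ f j`, where `f j` has norm `≈ r⁻¹ ^ j` and is chosen greedily,
with the sign making `|(f 0 + ⋯ + f j) (y j)| ≥ ‖f j‖ ‖y j‖`; since `r > 2`, the tail
`∑_{m > j} f m` is too small to undo this.
-/

open Finset

theorem exists_seq_forall_apply_sum_range {M : Type*} [AddCommMonoid M] {p : ℕ → M → M → Prop}
    (h : ∀ n s, ∃ m, p n s m) : ∃ f : ℕ → M, ∀ n, p n (∑ i ∈ range n, f i) (f n) := by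
  choose g hg using h
  let s : ℕ → M := fun n => Nat.rec 0 (fun k sk => sk + g k sk) n
  have hs : ∀ n, ∑ i ∈ range n, g i (s i) = s n := by
    intro n
    induction n with
    | zero => rfl
    | succ n ih => rw [sum_range_succ, ih]
  exact ⟨fun n => g n (s n), fun n => by simpa only [hs] using hg n (s n)⟩

section

variable {𝕜 X : Type*} [RCLike 𝕜] [NormedAddCommGroup X] [NormedSpace 𝕜 X]

theorem ContinuousLinearMap.exists_norm_le_and_mul_norm_le_norm_add_apply (P : X →L[𝕜] 𝕜)
    (v : X) {t : ℝ} (ht : 0 ≤ t) : ∃ g : X →L[𝕜] 𝕜, ‖g‖ ≤ t ∧ t * ‖v‖ ≤ ‖P v + g v‖ := by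
  obtain ⟨g₀, hg₀, hg₀v⟩ := exists_dual_vector'' 𝕜 v
  have hsmul : ∀ s : 𝕜, ‖s‖ = t → ‖s • g₀‖ ≤ t := fun s hs => by
    rw [norm_smul, hs]
    exact mul_le_of_le_one_right ht hg₀
  have ht' : ‖(t : 𝕜)‖ = t := by rw [RCLike.norm_ofReal, abs_of_nonneg ht]
  -- `P v + t ‖v‖` and `P v - t ‖v‖` are `2 t ‖v‖` apart, so one of them has norm `≥ t ‖v‖`
  have hsum : 2 * (t * ‖v‖) ≤ ‖P v + t * ‖v‖‖ + ‖P v - t * ‖v‖‖ := by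
    calc 2 * (t * ‖v‖) = ‖(P v + t * ‖v‖) - (P v - t * ‖v‖)‖ := by
          rw [add_sub_sub_cancel, ← two_mul, norm_mul, norm_mul, ht']
          simp
      _ ≤ _ := norm_sub_le _ _
  rcases le_total (t * ‖v‖) ‖P v + t * ‖v‖‖ with hp | hm
  · exact ⟨(t : 𝕜) • g₀, hsmul _ ht', by simpa [hg₀v] using hp⟩
  · refine ⟨(-t : 𝕜) • g₀, hsmul _ (by rw [norm_neg, ht']), ?_⟩
    simp only [smul_apply, hg₀v, smul_eq_mul, neg_mul, ← sub_eq_add_neg]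
    linarith

theorem exists_forall_one_le_norm_apply_of_tail_le (y : ℕ → X) {b : ℕ → ℝ}
    (hb₀ : ∀ n, 0 ≤ b n) (hb : Summable b)
    (h : ∀ n, 1 + ‖y n‖ * ∑' m, b (m + (n + 1)) ≤ b n * ‖y n‖) :
    ∃ F : X →L[𝕜] 𝕜, ∀ n, 1 ≤ ‖F (y n)‖ := by
  obtain ⟨f, hf⟩ := exists_seq_forall_apply_sum_range
    (p := fun n (P g : X →L[𝕜] 𝕜) => ‖g‖ ≤ b n ∧ b n * ‖y n‖ ≤ ‖P (y n) + g (y n)‖)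
    fun n P => P.exists_norm_le_and_mul_norm_le_norm_add_apply (y n) (hb₀ n)
  have hfs : Summable f := hb.of_norm_bounded fun n => (hf n).1
  refine ⟨∑' n, f n, fun n => ?_⟩
  have htail : ‖∑' m, f (m + (n + 1))‖ ≤ ∑' m, b (m + (n + 1)) :=
    tsum_of_norm_bounded ((summable_nat_add_iff (n + 1)).2 hb).hasSum fun m => (hf _).1
  have hhead : b n * ‖y n‖ ≤ ‖(∑ i ∈ range (n + 1), f i) (y n)‖ := by
    simpa only [sum_range_succ, add_apply] using (hf n).2
  calc 1 ≤ b n * ‖y n‖ - (∑' m, b (m + (n + 1))) * ‖y n‖ := by linarith [h n]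
    _ ≤ ‖(∑ i ∈ range (n + 1), f i) (y n)‖ - ‖(∑' m, f (m + (n + 1))) (y n)‖ := by
        gcongr
        exact ((∑' m, f (m + (n + 1))).le_opNorm _).trans (by gcongr)
    _ ≤ ‖(∑' n, f n) (y n)‖ := by
        rw [← hfs.sum_add_tsum_nat_add (n + 1), add_apply]
        exact norm_sub_le_norm_add _ _

theorem exists_forall_one_le_norm_apply_of_pow_le (y : ℕ → X) {r : ℝ} (hr : 2 < r)
    (hy : ∀ n, r ^ n ≤ ‖y n‖) : ∃ F : X →L[𝕜] 𝕜, ∀ n, 1 ≤ ‖F (y n)‖ := by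
  have hr₀ : 0 ≤ r⁻¹ := by positivity
  have hr₁ : r⁻¹ < 1 := inv_lt_one_of_one_lt₀ (by linarith)
  have hr2 : 0 < r - 2 := by linarith
  have hr1 : 0 < r - 1 := by linarith
  -- the factor `(r - 1) / (r - 2)` makes `b n` exceed its tail `∑_{m > n} b m` by exactly `r⁻¹ ^ n`
  refine exists_forall_one_le_norm_apply_of_tail_le y (b := fun n => (r - 1) / (r - 2) * r⁻¹ ^ n)
    (fun n => by positivity) ((summable_geometric_of_lt_one hr₀ hr₁).mul_left _) fun n => ?_
  have htail : ∑' m, (r - 1) / (r - 2) * r⁻¹ ^ (m + (n + 1)) = r⁻¹ ^ n / (r - 2) := by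
    simp only [pow_add, tsum_mul_left, tsum_mul_right, tsum_geometric_of_lt_one hr₀ hr₁]
    field_simp
  have hsplit : (r - 1) / (r - 2) * r⁻¹ ^ n * ‖y n‖
      = ‖y n‖ * (r⁻¹ ^ n / (r - 2)) + r⁻¹ ^ n * ‖y n‖ := by
    field_simp
    ring
  have hyn : 1 ≤ r⁻¹ ^ n * ‖y n‖ := by
    rw [inv_pow, one_le_inv_mul₀ (by positivity)]
    exact hy n
  rw [htail]
  linarith

end

theorem stmt_1_general {𝕜 : Type*} [RCLike 𝕜] {X : Type*} [NormedAddCommGroup X]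
    [NormedSpace 𝕜 X] {c : ℝ} (hc : 1 < c) (x : ℕ → X)
    (hx : ∀ n : ℕ, 1 ≤ n → c ^ n ≤ ‖x n‖) :
    ∃ (N : ℕ) (F : Fin N → (X →L[𝕜] 𝕜)), 1 ≤ N ∧
      ∀ n : ℕ, 1 ≤ n → ∃ k : Fin N, 1 ≤ ‖F k (x n)‖ := by
  obtain ⟨N, hN⟩ := pow_unbounded_of_one_lt 2 hc
  have hN₁ : 1 ≤ N := Nat.one_le_iff_ne_zero.2 fun h => by norm_num [h] at hN
  have hclass (i : Fin N) : ∃ F : X →L[𝕜] 𝕜, ∀ j, 1 ≤ ‖F (x (i + 1 + N * j))‖ :=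
    exists_forall_one_le_norm_apply_of_pow_le _ hN fun j => calc
      (c ^ N) ^ j ≤ c ^ (i + 1 + N * j) := by
        rw [← pow_mul]
        exact pow_le_pow_right₀ hc.le (by omega)
      _ ≤ _ := hx _ (by omega)
  choose F hF using hclass
  refine ⟨N, F, hN₁, fun n hn => ⟨⟨(n - 1) % N, Nat.mod_lt _ hN₁⟩, ?_⟩⟩
  have hn' : (n - 1) % N + 1 + N * ((n - 1) / N) = n := by
    have := Nat.mod_add_div (n - 1) N
    omega
  simpa only [hn'] using hF ⟨(n - 1) % N, Nat.mod_lt _ hN₁⟩ ((n - 1) / N)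

/-- Let `X` be a Banach space over `𝕜 = ℝ` or `ℂ`, let `c > 1`, and let `(x_n)_{n ≥ 1}` be a
sequence in `X` with `‖x n‖ ≥ c ^ n` for all `n ≥ 1`. Then there exist `N ≥ 1` and continuous
linear functionals `F 1, …, F N` such that `max_{1 ≤ k ≤ N} |F k (x n)| ≥ 1` for all `n ≥ 1`. -/
theorem stmt_1 {𝕜 : Type*} [RCLike 𝕜] {X : Type*} [NormedAddCommGroup X]
    [NormedSpace 𝕜 X] [CompleteSpace X] {c : ℝ} (hc : 1 < c) (x : ℕ → X)
    (hx : ∀ n : ℕ, 1 ≤ n → c ^ n ≤ ‖x n‖) :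
    ∃ (N : ℕ) (F : Fin N → (X →L[𝕜] 𝕜)), 1 ≤ N ∧
      ∀ n : ℕ, 1 ≤ n → ∃ k : Fin N, 1 ≤ ‖F k (x n)‖ :=
  stmt_1_general hc x hx
end

section
/- Let X be a Banach space, let c > 2, and let (x_n)_{n≥1} be a sequence in X with ‖x_n‖ = c^n for all n ≥ 1. Then there exists a continuous linear functional f ∈ X* such that |f(x_n)| ≥ (c − 2)/(c − 1) for all n ≥ 1. -/
/-! Build `f` as the limit of partial sums `S n = ψ 1 + ⋯ + ψ n`, choosing each increment greedily:
`ψ n` is `±c⁻ⁿ` times a norming functional of `x n`, the sign chosen so that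
`‖S n (x n)‖ ≥ 1`. The tail `f - S n` then has norm at most `c⁻ⁿ / (c - 1)`, so it changes the
value at `x n` by at most `1 / (c - 1)`, leaving `‖f (x n)‖ ≥ 1 - 1 / (c - 1) = (c - 2) / (c - 1)`. -/

theorem exists_seq_of_forall_exists_geometric_step {E : Type*} [NormedAddCommGroup E]
    [CompleteSpace E] (P : ℕ → E → Prop) {C r : ℝ} (hr : r < 1)
    (step : ∀ n a, ∃ b, ‖b‖ ≤ C * r ^ n ∧ P n (a + b)) :
    ∃ (S : ℕ → E) (f : E), (∀ n, P n (S (n + 1))) ∧ ∀ n, ‖S n - f‖ ≤ C * r ^ n / (1 - r) := by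
  choose b hb hP using step
  let S : ℕ → E := fun n => Nat.rec 0 (fun k a => a + b k a) n
  have hS : ∀ n, S (n + 1) = S n + b n (S n) := fun n => rfl
  have hdist : ∀ n, dist (S n) (S (n + 1)) ≤ C * r ^ n := fun n => by
    rw [hS, dist_eq_norm, sub_add_cancel_left, norm_neg]
    exact hb n _
  obtain ⟨f, hf⟩ := cauchySeq_tendsto_of_complete (cauchySeq_of_le_geometric r C hr hdist)
  refine ⟨S, f, fun n => hS n ▸ hP n _, fun n => ?_⟩
  rw [← dist_eq_norm]
  exact dist_le_of_le_geometric_of_tendsto r C hr hdist hf n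

theorem RCLike.exists_norm_eq_one_one_le_norm_add {𝕜 : Type*} [RCLike 𝕜] (s : 𝕜) :
    ∃ ε : 𝕜, ‖ε‖ = 1 ∧ 1 ≤ ‖s + ε‖ := by
  have h2 : (2 : ℝ) ≤ ‖s + 1‖ + ‖s + -1‖ := by
    calc (2 : ℝ) = ‖(s + 1) - (s + -1)‖ := by ring_nf; norm_num
      _ ≤ ‖s + 1‖ + ‖s + -1‖ := norm_sub_le _ _
  by_cases h : 1 ≤ ‖s + 1‖
  · exact ⟨1, norm_one, h⟩
  · exact ⟨-1, by simp, by linarith⟩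

theorem StrongDual.exists_norm_le_inv_one_le_norm_add_apply {𝕜 X : Type*} [RCLike 𝕜]
    [NormedAddCommGroup X] [NormedSpace 𝕜 X] (φ : StrongDual 𝕜 X) {y : X} (hy : y ≠ 0) :
    ∃ ψ : StrongDual 𝕜 X, ‖ψ‖ ≤ ‖y‖⁻¹ ∧ 1 ≤ ‖(φ + ψ) y‖ := by
  obtain ⟨g, hg, hgy⟩ := exists_dual_vector'' 𝕜 y
  obtain ⟨ε, hε, hφε⟩ := RCLike.exists_norm_eq_one_one_le_norm_add (φ y)
  refine ⟨(ε / ‖y‖) • g, ?_, ?_⟩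
  · calc ‖(ε / ‖y‖) • g‖ = ‖y‖⁻¹ * ‖g‖ := by simp [norm_smul, hε]
      _ ≤ ‖y‖⁻¹ := mul_le_of_le_one_right (by positivity) hg
  · have hy' : (‖y‖ : 𝕜) ≠ 0 := by simpa using hy
    simpa [hgy, div_mul_cancel₀ _ hy'] using hφε

theorem stmt_2_general {𝕜 : Type*} [RCLike 𝕜] {X : Type*} [NormedAddCommGroup X]
    [NormedSpace 𝕜 X] {c : ℝ} (hc : 2 < c) (x : ℕ → X)
    (hx : ∀ n : ℕ, 1 ≤ n → ‖x n‖ = c ^ n) :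
    ∃ f : X →L[𝕜] 𝕜, ∀ n : ℕ, 1 ≤ n → (c - 2) / (c - 1) ≤ ‖f (x n)‖ := by
  have hc1 : 1 < c := by linarith
  have hx' : ∀ n, ‖x (n + 1)‖ = c ^ (n + 1) := fun n => hx _ n.succ_pos
  obtain ⟨S, f, hSx, hSf⟩ := exists_seq_of_forall_exists_geometric_step
    (fun n (φ : StrongDual 𝕜 X) => 1 ≤ ‖φ (x (n + 1))‖) (C := c⁻¹) (inv_lt_one_of_one_lt₀ hc1)
    fun n φ => by
      have hy : x (n + 1) ≠ 0 := norm_ne_zero_iff.mp (by rw [hx']; positivity)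
      obtain ⟨ψ, hψ, hφψ⟩ := φ.exists_norm_le_inv_one_le_norm_add_apply hy
      exact ⟨ψ, by rwa [hx', ← inv_pow, pow_succ'] at hψ, hφψ⟩
  refine ⟨f, fun n hn => ?_⟩
  obtain ⟨m, rfl⟩ := Nat.exists_eq_add_of_le' hn
  have hc1' : c - 1 ≠ 0 := by linarith
  have htail : c⁻¹ * c⁻¹ ^ (m + 1) / (1 - c⁻¹) * c ^ (m + 1) = 1 / (c - 1) := by
    rw [inv_pow]
    field_simp
  calc (c - 2) / (c - 1) = 1 - 1 / (c - 1) := by field_simp; ring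
    _ ≤ ‖S (m + 1) (x (m + 1))‖ - ‖S (m + 1) - f‖ * ‖x (m + 1)‖ := by
        rw [hx', ← htail]
        gcongr
        exacts [hSx m, hSf _]
    _ ≤ ‖f (x (m + 1))‖ := by
        have hdiff := (S (m + 1) - f).le_opNorm (x (m + 1))
        rw [sub_apply] at hdiff
        linarith [norm_sub_norm_le (S (m + 1) (x (m + 1))) (f (x (m + 1)))]

/-- Let `X` be a Banach space over `𝕜 = ℝ` or `ℂ`, let `c > 2`, and let `(x_n)_{n ≥ 1}` be a
sequence in `X` with `‖x n‖ = c ^ n` for all `n ≥ 1`. Then there is a continuous linear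
functional `f` with `|f (x n)| ≥ (c - 2)/(c - 1)` for all `n ≥ 1`. -/
theorem stmt_2 {𝕜 : Type*} [RCLike 𝕜] {X : Type*} [NormedAddCommGroup X]
    [NormedSpace 𝕜 X] [CompleteSpace X] {c : ℝ} (hc : 2 < c) (x : ℕ → X)
    (hx : ∀ n : ℕ, 1 ≤ n → ‖x n‖ = c ^ n) :
    ∃ f : X →L[𝕜] 𝕜, ∀ n : ℕ, 1 ≤ n → (c - 2) / (c - 1) ≤ ‖f (x n)‖ :=
  stmt_2_general hc x hx
end

section
/- Let X be a Banach space and let Y be a norming subspace of X*, i.e. a closed linear subspace Y ⊆ X* for which there exists C > 0 such that ‖x‖ ≤ C · sup{ |f(x)| : f ∈ Y, ‖f‖ ≤ 1 } for every x ∈ X. Let c > 1 and let (x_n)_{n≥1} be a sequence in X with ‖x_n‖ ≥ c^n for all n ≥ 1. Then 0 does not belong to the closure of {x_n : n ≥ 1} in the σ(X, Y) topology (the topology on X generated by the seminorms x ↦ |f(x)| for f ∈ Y). -/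
/-!
Put `θ = c⁻¹` and split `ℕ` into `K` residue classes, with `K` so large that `q = θ ^ K` is tiny.
Along a class `y m = x (j + m * K)` one functional `f = ∑ q ^ m • g m ∈ Y` is built recursively:
`g m` is a norming functional for `y m`, with its sign chosen so that the new term does not cancel
the part of the series already fixed at `y m`. The tail is at most `q ^ (m + 1) * ‖y m‖ / (1 - q)`,
so `‖f (y m)‖ ≳ q ^ m * ‖y m‖ ≥ 1`, and the `σ(X, Y)`-neighbourhood `{v | ∀ j < K, ‖f_j v‖ < ε}`
of `0` contains no `x n`.
-/

open Topology

theorem exists_seq_forall_of_forall_exists {α : Type*} {P : (n : ℕ) → (Fin n → α) → α → Prop}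
    (h : ∀ n prev, ∃ a, P n prev a) : ∃ g : ℕ → α, ∀ n, P n (fun k ↦ g k) (g n) := by
  choose F hF using h
  refine ⟨Nat.strongRec fun n ih ↦ F n fun k ↦ ih k k.2, fun n ↦ ?_⟩
  dsimp only
  rw [Nat.strongRec_eq]
  exact hF _ _

theorem norm_le_norm_add_or_norm_le_norm_sub {E : Type*} [SeminormedAddCommGroup E]
    [NormedSpace ℝ E] (a b : E) : ‖b‖ ≤ ‖a + b‖ ∨ ‖b‖ ≤ ‖a - b‖ := by
  by_contra! h
  have : ‖(a + b) - (a - b)‖ ≤ ‖a + b‖ + ‖a - b‖ := norm_sub_le _ _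
  rw [add_sub_sub_cancel, ← two_smul ℝ b, norm_smul, Real.norm_two] at this
  linarith [h.1, h.2]

theorem notMem_closure_induced_of_forall_exists_le_dist {α ι κ E : Type*} [PseudoMetricSpace E]
    [Finite κ] (Φ : α → ι → E) (i : κ → ι) {s : Set α} {a : α} {ε : ℝ} (hε : 0 < ε)
    (h : ∀ y ∈ s, ∃ k, ε ≤ dist (Φ y (i k)) (Φ a (i k))) :
    a ∉ closure[.induced Φ Pi.topologicalSpace] s := by
  let := TopologicalSpace.induced Φ Pi.topologicalSpace
  have hU : IsOpen (Φ ⁻¹' ⋂ k, {u | dist (u (i k)) (Φ a (i k)) < ε}) :=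
    isOpen_induced <| isOpen_iInter_of_finite fun k ↦ isOpen_lt (by fun_prop) continuous_const
  intro ha
  obtain ⟨y, hyU, hys⟩ := mem_closure_iff.mp ha _ hU (by simpa using fun _ ↦ hε)
  obtain ⟨k, hk⟩ := h y hys
  exact (Set.mem_iInter.mp hyU k).not_ge hk

section Norming

variable {𝕜 X : Type*} [RCLike 𝕜] [NormedAddCommGroup X] [NormedSpace 𝕜 X]

def IsNormingWith (Y : Submodule 𝕜 (X →L[𝕜] 𝕜)) (C : ℝ) : Prop :=
  ∀ x : X, ∃ f ∈ Y, ‖f‖ ≤ 1 ∧ ‖x‖ ≤ C * ‖f x‖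

theorem isNormingWith_of_le_mul_sSup {Y : Submodule 𝕜 (X →L[𝕜] 𝕜)} {C C' : ℝ} (hC : 0 < C)
    (hY : ∀ x : X, ‖x‖ ≤ C * sSup ((fun f : X →L[𝕜] 𝕜 ↦ ‖f x‖) '' {f | f ∈ Y ∧ ‖f‖ ≤ 1}))
    (hCC' : C < C') : IsNormingWith Y C' := by
  intro x
  rcases eq_or_ne x 0 with rfl | hx
  · exact ⟨0, Y.zero_mem, by simp, by simp⟩
  have hne : ((fun f : X →L[𝕜] 𝕜 ↦ ‖f x‖) '' {f | f ∈ Y ∧ ‖f‖ ≤ 1}).Nonempty :=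
    ⟨_, 0, ⟨Y.zero_mem, by simp⟩, rfl⟩
  have hlt : ‖x‖ / C' < sSup ((fun f : X →L[𝕜] 𝕜 ↦ ‖f x‖) '' {f | f ∈ Y ∧ ‖f‖ ≤ 1}) :=
    calc ‖x‖ / C' < ‖x‖ / C := div_lt_div_of_pos_left (norm_pos_iff.mpr hx) hC hCC'
      _ ≤ _ := (div_le_iff₀' hC).mpr (hY x)
  obtain ⟨_, ⟨f, ⟨hfY, hf⟩, rfl⟩, hfx⟩ := exists_lt_of_lt_csSup hne hlt
  exact ⟨f, hfY, hf, ((div_lt_iff₀' (hC.trans hCC')).mp hfx).le⟩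

namespace IsNormingWith

variable {Y : Submodule 𝕜 (X →L[𝕜] 𝕜)} {C : ℝ}

theorem exists_le_norm_add (hY : IsNormingWith Y C) (hC : 0 ≤ C) (a : 𝕜) {t : ℝ} (ht : 0 ≤ t)
    (x : X) : ∃ g ∈ Y, ‖g‖ ≤ 1 ∧ t * ‖x‖ ≤ C * ‖a + t * g x‖ := by
  obtain ⟨f, hfY, hf, hfx⟩ := hY x
  have hx : t * ‖x‖ ≤ C * ‖(t : 𝕜) * f x‖ := by
    rw [norm_mul, RCLike.norm_ofReal, abs_of_nonneg ht, mul_left_comm]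
    exact mul_le_mul_of_nonneg_left hfx ht
  rcases norm_le_norm_add_or_norm_le_norm_sub a ((t : 𝕜) * f x) with h | h
  · exact ⟨f, hfY, hf, hx.trans (mul_le_mul_of_nonneg_left h hC)⟩
  · refine ⟨-f, Y.neg_mem hfY, by rwa [norm_neg], hx.trans ?_⟩
    rw [neg_apply, mul_neg, ← sub_eq_add_neg]
    exact mul_le_mul_of_nonneg_left h hC

theorem exists_mem_forall_geometric_le_norm_apply (hY : IsNormingWith Y C)
    (hYc : IsClosed (Y : Set (X →L[𝕜] 𝕜))) (hC : 0 < C) {q : ℝ} (hq0 : 0 ≤ q) (hq1 : q < 1)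
    (y : ℕ → X) : ∃ f ∈ Y, ∀ m, q ^ m * ‖y m‖ * (C⁻¹ - q / (1 - q)) ≤ ‖f (y m)‖ := by
  obtain ⟨g, hg⟩ := exists_seq_forall_of_forall_exists fun m (prev : Fin m → X →L[𝕜] 𝕜) ↦
    hY.exists_le_norm_add hC.le (∑ k : Fin m, ((q ^ (k : ℕ) : ℝ) : 𝕜) * prev k (y m))
      (pow_nonneg hq0 m) (y m)
  have hnorm_coe (k : ℕ) : ‖((q ^ k : ℝ) : 𝕜)‖ = q ^ k := by
    rw [RCLike.norm_ofReal, abs_of_nonneg (pow_nonneg hq0 k)]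
  have hsum : Summable fun k ↦ ((q ^ k : ℝ) : 𝕜) • g k := by
    refine .of_norm_bounded (summable_geometric_of_lt_one hq0 hq1) fun k ↦ ?_
    rw [norm_smul, hnorm_coe]
    exact mul_le_of_le_one_right (pow_nonneg hq0 k) (hg k).2.1
  refine ⟨∑' k, ((q ^ k : ℝ) : 𝕜) • g k,
    hYc.mem_of_tendsto hsum.hasSum (.of_forall fun s ↦ Y.sum_mem fun k _ ↦ Y.smul_mem _ (hg k).1),
    fun m ↦ ?_⟩
  have hval : HasSum (fun k ↦ ((q ^ k : ℝ) : 𝕜) * g k (y m))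
      ((∑' k, ((q ^ k : ℝ) : 𝕜) • g k) (y m)) := by
    simpa using hsum.hasSum.mapL (ContinuousLinearMap.apply 𝕜 𝕜 (y m))
  have htail := norm_sub_le_of_geometric_bound_of_hasSum hq1 (C := ‖y m‖) (fun k ↦ by
    rw [norm_mul, hnorm_coe, mul_comm]
    gcongr
    simpa using (g k).le_of_opNorm_le (hg k).2.1 (y m)) hval (m + 1)
  rw [Finset.sum_range_succ, ← Fin.sum_univ_eq_sum_range] at htail
  have hhead := (hg m).2.2
  beta_reduce at hhead
  set H := ∑ k : Fin m, ((q ^ (k : ℕ) : ℝ) : 𝕜) * g k (y m) + ((q ^ m : ℝ) : 𝕜) * g m (y m)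
  set F := (∑' k, ((q ^ k : ℝ) : 𝕜) • g k) (y m)
  calc q ^ m * ‖y m‖ * (C⁻¹ - q / (1 - q))
        = q ^ m * ‖y m‖ / C - ‖y m‖ * q ^ (m + 1) / (1 - q) := by ring
    _ ≤ ‖H‖ - ‖H - F‖ := sub_le_sub ((div_le_iff₀' hC).mpr hhead) htail
    _ ≤ ‖F‖ := by linarith [norm_sub_norm_le H F]

end IsNormingWith

end Norming

theorem stmt_3_general {𝕜 : Type*} [RCLike 𝕜] {X : Type*} [NormedAddCommGroup X]
    [NormedSpace 𝕜 X] (Y : Submodule 𝕜 (X →L[𝕜] 𝕜))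
    (hYclosed : IsClosed (Y : Set (X →L[𝕜] 𝕜)))
    (hYnorming : ∃ C : ℝ, 0 < C ∧ ∀ x : X,
      ‖x‖ ≤ C * sSup ((fun f : X →L[𝕜] 𝕜 => ‖f x‖) '' {f | f ∈ Y ∧ ‖f‖ ≤ 1}))
    {c : ℝ} (hc : 1 < c) (x : ℕ → X) (hx : ∀ n : ℕ, 1 ≤ n → c ^ n ≤ ‖x n‖) :
    (0 : X) ∉ @closure X
      (TopologicalSpace.induced (fun (v : X) (f : Y) => (f : X →L[𝕜] 𝕜) v) Pi.topologicalSpace)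
      {y : X | ∃ n : ℕ, 1 ≤ n ∧ y = x n} := by
  obtain ⟨C, hC, hnorm⟩ := hYnorming
  have hY : IsNormingWith Y (2 * C) := isNormingWith_of_le_mul_sSup hC hnorm (by linarith)
  obtain ⟨K, hK⟩ := exists_pow_lt_of_lt_one (by positivity : 0 < (4 * C + 1)⁻¹)
    (inv_lt_one_of_one_lt₀ hc)
  set q := c⁻¹ ^ K
  have hq0 : 0 ≤ q := by positivity
  have hq1 : q < 1 := hK.trans (inv_lt_one_of_one_lt₀ (by linarith))
  have hK0 : 0 < K := Nat.pos_of_ne_zero fun h ↦ by simp [q, h] at hq1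
  have hgap : (4 * C)⁻¹ ≤ (2 * C)⁻¹ - q / (1 - q) := by
    have h1 : q * (4 * C + 1) < 1 := (lt_div_iff₀ (by positivity)).mp (by rwa [one_div])
    rw [le_sub_iff_add_le', div_add' _ _ _ (by linarith), div_le_iff₀ (by linarith)]
    field_simp
    nlinarith
  choose f hfY hf using fun j : Fin K ↦ hY.exists_mem_forall_geometric_le_norm_apply hYclosed
    (by positivity) hq0 hq1 fun m ↦ x (j + m * K)
  refine notMem_closure_induced_of_forall_exists_le_dist _ (fun j ↦ (⟨f j, hfY j⟩ : Y))
    (by positivity : 0 < (4 * C)⁻¹) ?_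
  rintro _ ⟨n, hn, rfl⟩
  refine ⟨⟨n % K, Nat.mod_lt n hK0⟩, ?_⟩
  have hfn := hf ⟨n % K, Nat.mod_lt n hK0⟩ (n / K)
  simp only [Nat.mod_add_div'] at hfn
  have hqn : 1 ≤ q ^ (n / K) * ‖x n‖ := by
    rw [← pow_mul, inv_pow, one_le_inv_mul₀ (by positivity)]
    exact (pow_le_pow_right₀ hc.le (Nat.mul_div_le n K)).trans (hx n hn)
  rw [map_zero, dist_zero_right]
  calc (4 * C)⁻¹ = 1 * (4 * C)⁻¹ := (one_mul _).symm
    _ ≤ q ^ (n / K) * ‖x n‖ * ((2 * C)⁻¹ - q / (1 - q)) := by gcongr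
    _ ≤ _ := hfn

/-- Let `X` be a Banach space over `𝕜 = ℝ` or `ℂ` and `Y` a norming closed subspace of `X*`:
there is `C > 0` with `‖x‖ ≤ C * sup {|f x| : f ∈ Y, ‖f‖ ≤ 1}` for all `x`. If `c > 1` and
`‖x n‖ ≥ c ^ n` for all `n ≥ 1`, then `0` is not in the `σ(X, Y)`-closure of `{x_n : n ≥ 1}`,
where `σ(X, Y)` is the coarsest topology on `X` making every `f ∈ Y` continuous (induced by
the map `X → (Y → 𝕜)`). -/
theorem stmt_3 {𝕜 : Type*} [RCLike 𝕜] {X : Type*} [NormedAddCommGroup X]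
    [NormedSpace 𝕜 X] [CompleteSpace X] (Y : Submodule 𝕜 (X →L[𝕜] 𝕜))
    (hYclosed : IsClosed (Y : Set (X →L[𝕜] 𝕜)))
    (hYnorming : ∃ C : ℝ, 0 < C ∧ ∀ x : X,
      ‖x‖ ≤ C * sSup ((fun f : X →L[𝕜] 𝕜 => ‖f x‖) '' {f | f ∈ Y ∧ ‖f‖ ≤ 1}))
    {c : ℝ} (hc : 1 < c) (x : ℕ → X) (hx : ∀ n : ℕ, 1 ≤ n → c ^ n ≤ ‖x n‖) :
    (0 : X) ∉ @closure X
      (TopologicalSpace.induced (fun (v : X) (f : Y) => (f : X →L[𝕜] 𝕜) v) Pi.topologicalSpace)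
      {y : X | ∃ n : ℕ, 1 ≤ n ∧ y = x n} :=
  stmt_3_general Y hYclosed hYnorming hc x hx
end

section
/- Let X be a nonzero complex Banach space and let T be a weakly hypercyclic bounded linear operator on X. Then the spectrum σ(T) contains a point z with |z| = 1. -/
/-!
Suppose `σ(T)` misses the unit circle, so that some annulus `r ≤ ‖z‖ ≤ R` with `r < 1 < R` lies in
the resolvent set. The Laurent coefficients `c n` of the resolvent on this annulus satisfy
`T ^ k * c (-1) = c (-1 - k)` and `c k * T ^ k = c 0`, with `‖c (-1 - k)‖ = O(r ^ k)` and
`‖c k‖ = O(R⁻¹ ^ k)`. Writing `x = c (-1) x + y`, the orbit of `c (-1) x` decays geometrically,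
and either `c 0 y = 0`, in which case `y = c (-1) y` and the whole orbit is bounded, or
`‖T ^ n y‖` grows like `R ^ n`.

A weakly dense set is unbounded, which rules out the first case. In the second, `∑ ‖T ^ n x‖^(-1/2)`
converges, and a plank-type argument (random coefficients in `[-1, 1]` against norming functionals,
then a weak-* cluster point) gives a functional `f` with `1 ≤ ‖f (T ^ n x)‖` for all large `n`;
but a tail of a weakly dense orbit is still weakly dense, so it meets the weak neighbourhood
`{‖f ·‖ < 1}` of `0`.
-/

open MeasureTheory ProbabilityTheory Filter Topology Metric Set Complex
open scoped Real

theorem measure_pi_le_of_forall_slice_le {α : Type*} [MeasurableSpace α] {m : ℕ}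
    (ν : Measure α) [IsProbabilityMeasure ν] (i : Fin (m + 1)) {S : Set (Fin (m + 1) → α)}
    (hS : MeasurableSet S) {ε : ENNReal}
    (hslice : ∀ r : Fin m → α, ν {s | Fin.insertNth i s r ∈ S} ≤ ε) :
    Measure.pi (fun _ => ν) S ≤ ε := by
  set e := MeasurableEquiv.piFinSuccAbove (fun _ : Fin (m + 1) => α) i
  have hS' : MeasurableSet (e.symm ⁻¹' S) := e.symm.measurable hS
  calc Measure.pi (fun _ => ν) S
      = (ν.prod (Measure.pi fun _ : Fin m => ν)) (e.symm ⁻¹' S) := by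
        rw [← (measurePreserving_piFinSuccAbove (fun _ => ν) i).measure_preimage_equiv,
          ← preimage_comp, e.symm_comp_self, preimage_id]
    _ = ∫⁻ r, ν {s | Fin.insertNth i s r ∈ S} ∂(Measure.pi fun _ : Fin m => ν) :=
        Measure.prod_apply_symm hS'
    _ ≤ ∫⁻ _, ε ∂(Measure.pi fun _ : Fin m => ν) := lintegral_mono hslice
    _ = ε := by simp

section Plank

variable {𝕜 : Type*} [RCLike 𝕜]

theorem cond_Icc_le_inv_of_norm_mul_add_lt_one {a : ℝ} (ha : 0 < a) (q : 𝕜) :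
    volume[|Icc (-1 : ℝ) 1] {s : ℝ | ‖(s : 𝕜) * a + q‖ < 1} ≤ ENNReal.ofReal a⁻¹ := by
  have hsub : {s : ℝ | ‖(s : 𝕜) * a + q‖ < 1} ⊆
      Ioo ((-RCLike.re q - 1) / a) ((-RCLike.re q + 1) / a) := by
    intro s hs
    have hre := (RCLike.abs_re_le_norm _).trans_lt hs
    rw [map_add, ← RCLike.ofReal_mul, RCLike.ofReal_re, abs_lt] at hre
    constructor
    · rw [div_lt_iff₀ ha]; linarith
    · rw [lt_div_iff₀ ha]; linarith
  calc volume[|Icc (-1 : ℝ) 1] {s : ℝ | ‖(s : 𝕜) * a + q‖ < 1}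
      ≤ volume[|Icc (-1 : ℝ) 1] (Ioo ((-RCLike.re q - 1) / a) ((-RCLike.re q + 1) / a)) :=
        measure_mono hsub
    _ ≤ 2⁻¹ * volume (Ioo ((-RCLike.re q - 1) / a) ((-RCLike.re q + 1) / a)) := by
        rw [cond_apply measurableSet_Icc, Real.volume_Icc, show (1 : ℝ) - -1 = 2 by norm_num,
          ENNReal.ofReal_ofNat]
        gcongr
        exact inter_subset_right
    _ = ENNReal.ofReal a⁻¹ := by
        rw [Real.volume_Ioo, show (-RCLike.re q + 1) / a - (-RCLike.re q - 1) / a = 2 * a⁻¹ by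
          field_simp; ring, ENNReal.ofReal_mul zero_le_two, ENNReal.ofReal_ofNat, ← mul_assoc,
          ENNReal.inv_mul_cancel two_ne_zero ENNReal.ofNat_ne_top, one_mul]

/-- Pick `t` uniformly in `[-1, 1]^m`. With the other coordinates fixed, the slab
`‖∑ k, t k * c i k‖ < 1` meets the `t i`-axis in an interval of length at most `2 / a i`, so it has
probability at most `1 / a i`; these slabs cannot cover the cube. -/
theorem exists_abs_le_one_one_le_norm_sum_mul {m : ℕ} (c : Fin m → Fin m → 𝕜) (a : Fin m → ℝ)
    (ha : ∀ i, 0 < a i) (hc : ∀ i, c i i = a i) (hsum : ∑ i, (a i)⁻¹ < 1) :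
    ∃ t : Fin m → ℝ, (∀ k, |t k| ≤ 1) ∧ ∀ i, 1 ≤ ‖∑ k, (t k : 𝕜) * c i k‖ := by
  rcases m with _ | m
  · exact ⟨0, fun k => k.elim0, fun i => i.elim0⟩
  have : IsProbabilityMeasure (volume[|Icc (-1 : ℝ) 1]) :=
    cond_isProbabilityMeasure_of_finite (by simp) (by simp)
  set μ := Measure.pi fun _ : Fin (m + 1) => volume[|Icc (-1 : ℝ) 1]
  set bad : Fin (m + 1) → Set (Fin (m + 1) → ℝ) := fun i => {t | ‖∑ k, (t k : 𝕜) * c i k‖ < 1}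
  have hbad : ∀ i, μ (bad i) ≤ ENNReal.ofReal (a i)⁻¹ := by
    intro i
    refine measure_pi_le_of_forall_slice_le _ i
      (isOpen_lt (by fun_prop) continuous_const).measurableSet fun r => ?_
    convert cond_Icc_le_inv_of_norm_mul_add_lt_one (ha i)
      (∑ j, (r j : 𝕜) * c i (i.succAbove j)) using 4 with s
    simp only [mem_ofPred_eq, Fin.sum_univ_succAbove _ i, Fin.insertNth_apply_same,
      Fin.insertNth_apply_succAbove, hc]
  have hcube : μ (univ.pi fun _ => Icc (-1 : ℝ) 1) = 1 := by
    rw [Measure.pi_pi, cond_apply_self (by simp) (by simp), Finset.prod_const_one]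
  have hunion : μ (⋃ i, bad i) < 1 :=
    calc μ (⋃ i, bad i) ≤ ∑ i, μ (bad i) := measure_iUnion_fintype_le μ bad
      _ ≤ ∑ i, ENNReal.ofReal (a i)⁻¹ := Finset.sum_le_sum fun i _ => hbad i
      _ = ENNReal.ofReal (∑ i, (a i)⁻¹) :=
        (ENNReal.ofReal_sum_of_nonneg fun i _ => (inv_pos.2 (ha i)).le).symm
      _ < 1 := ENNReal.ofReal_lt_one.2 hsum
  obtain ⟨t, htcube, htbad⟩ : ((univ.pi fun _ => Icc (-1 : ℝ) 1) \ ⋃ i, bad i).Nonempty :=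
    sdiff_nonempty.2 fun hsub => (hcube ▸ measure_mono hsub).not_gt hunion
  refine ⟨t, fun k => abs_le.2 (htcube k (mem_univ k)), fun i => ?_⟩
  exact le_of_not_gt fun h => htbad (mem_iUnion.2 ⟨i, h⟩)

variable {X : Type*} [NormedAddCommGroup X] [NormedSpace 𝕜 X]

theorem exists_norm_le_one_le_norm_apply_of_sum_lt_one {m : ℕ} (v : Fin m → X)
    (hv : ∀ i, v i ≠ 0) (hsum : ∑ i, (√‖v i‖)⁻¹ < 1) :
    ∃ f : StrongDual 𝕜 X, ‖f‖ ≤ 1 ∧ ∀ i, 1 ≤ ‖f (v i)‖ := by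
  choose g hg_norm hg_apply using fun i => exists_dual_vector 𝕜 (v i) (norm_ne_zero_iff.2 (hv i))
  have hpos : ∀ i, 0 < √‖v i‖ := fun i => Real.sqrt_pos.2 (norm_pos_iff.2 (hv i))
  -- The weights `(√‖v k‖)⁻¹` make the diagonal `√‖v i‖`, so `hsum` bounds `‖f‖` as well.
  obtain ⟨t, ht, hfv⟩ := exists_abs_le_one_one_le_norm_sum_mul (𝕜 := 𝕜)
    (fun i k => ((√‖v k‖)⁻¹ : 𝕜) * g k (v i)) (fun i => √‖v i‖) hpos
    (fun i => by
      rw [hg_apply, ← RCLike.ofReal_inv, ← RCLike.ofReal_mul, inv_mul_eq_div, Real.div_sqrt])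
    hsum
  refine ⟨∑ k, ((t k * (√‖v k‖)⁻¹ : ℝ) : 𝕜) • g k, ?_, fun i => ?_⟩
  · calc ‖∑ k, ((t k * (√‖v k‖)⁻¹ : ℝ) : 𝕜) • g k‖ ≤ ∑ k, (√‖v k‖)⁻¹ := by
          refine (norm_sum_le _ _).trans (Finset.sum_le_sum fun k _ => ?_)
          rw [norm_smul, hg_norm, mul_one, RCLike.norm_ofReal, abs_mul,
            abs_of_pos (inv_pos.2 (hpos k))]
          exact mul_le_of_le_one_left (inv_pos.2 (hpos k)).le (ht k)
      _ ≤ 1 := hsum.le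
  · convert hfv i using 2
    simp only [_root_.sum_apply, _root_.smul_apply, smul_eq_mul]
    exact Finset.sum_congr rfl fun k _ => by push_cast; ring

theorem exists_norm_le_one_le_norm_apply_of_tsum_lt_one (v : ℕ → X) (hv : ∀ n, v n ≠ 0)
    (hs : Summable fun n => (√‖v n‖)⁻¹) (htsum : ∑' n, (√‖v n‖)⁻¹ < 1) :
    ∃ f : StrongDual 𝕜 X, ‖f‖ ≤ 1 ∧ ∀ n, 1 ≤ ‖f (v n)‖ := by
  have hfin : ∀ N, ∃ f : StrongDual 𝕜 X, ‖f‖ ≤ 1 ∧ ∀ n < N, 1 ≤ ‖f (v n)‖ := by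
    intro N
    obtain ⟨f, hf, hfv⟩ := exists_norm_le_one_le_norm_apply_of_sum_lt_one (𝕜 := 𝕜)
      (fun i : Fin N => v i) (fun i => hv i) <| by
        rw [Fin.sum_univ_eq_sum_range (fun n => (√‖v n‖)⁻¹)]
        exact (hs.sum_le_tsum _ fun n _ => by positivity).trans_lt htsum
    exact ⟨f, hf, fun n hn => hfv ⟨n, hn⟩⟩
  choose f hf_norm hf_apply using hfin
  obtain ⟨φ, hφ_norm, hφ⟩ :=
    (WeakDual.isCompact_closedBall (𝕜 := 𝕜) (E := X) 0 1).exists_clusterPt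
      (f := map (fun N => StrongDual.toWeakDual (f N)) atTop)
      (tendsto_principal.2 (.of_forall fun N => by simpa using hf_norm N))
  refine ⟨WeakDual.toStrongDual φ, by simpa using hφ_norm, fun n => ?_⟩
  have hclosed : IsClosed {ψ : WeakDual 𝕜 X | 1 ≤ ‖ψ (v n)‖} :=
    isClosed_le continuous_const (WeakDual.eval_continuous (v n)).norm
  refine hclosed.closure_subset (mem_closure_iff_clusterPt.2 (hφ.mono ?_))
  exact tendsto_principal.2 (eventually_atTop.2 ⟨n + 1, fun N hN => hf_apply N n hN⟩)

theorem exists_eventually_one_le_norm_apply {v : ℕ → X} (hv : ∀ᶠ n in atTop, v n ≠ 0)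
    (hs : Summable fun n => (√‖v n‖)⁻¹) :
    ∃ f : StrongDual 𝕜 X, ∀ᶠ n in atTop, 1 ≤ ‖f (v n)‖ := by
  obtain ⟨N, hN⟩ := eventually_atTop.1 <| hv.and
    ((tendsto_sum_nat_add fun n => (√‖v n‖)⁻¹).eventually (gt_mem_nhds one_pos))
  obtain ⟨f, -, hf⟩ := exists_norm_le_one_le_norm_apply_of_tsum_lt_one (𝕜 := 𝕜)
    (fun k => v (k + N)) (fun k => (hN (k + N) (by omega)).1)
    ((summable_nat_add_iff N).2 hs) (hN N le_rfl).2
  refine ⟨f, eventually_atTop.2 ⟨N, fun n hn => ?_⟩⟩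
  simpa [Nat.sub_add_cancel hn] using hf (n - N)

theorem summable_inv_sqrt_norm_of_geometric {v : ℕ → X} {c β : ℝ} (hc : 0 < c) (hβ : 1 < β)
    (hv : ∀ᶠ n in atTop, c * β ^ n ≤ ‖v n‖) : Summable fun n => (√‖v n‖)⁻¹ := by
  have hβ' : (√β)⁻¹ < 1 := inv_lt_one_of_one_lt₀ (Real.lt_sqrt_of_sq_lt (by simpa using hβ))
  refine Summable.of_norm_bounded_eventually_nat
    ((summable_geometric_of_lt_one (by positivity) hβ').mul_left (√c)⁻¹) ?_
  filter_upwards [hv] with n hn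
  rw [Real.norm_of_nonneg (by positivity)]
  have hsq : (√c * √β ^ n) ^ 2 = c * β ^ n := by
    rw [mul_pow, ← pow_mul, mul_comm n, pow_mul, Real.sq_sqrt hc.le, Real.sq_sqrt (by positivity)]
  calc (√‖v n‖)⁻¹ ≤ (√c * √β ^ n)⁻¹ :=
        inv_anti₀ (by positivity) (Real.le_sqrt_of_sq_le (hsq ▸ hn))
    _ = (√c)⁻¹ * (√β)⁻¹ ^ n := by rw [mul_inv, inv_pow]

end Plank

section WeakTopology

variable {𝕜 X : Type*} [RCLike 𝕜] [NormedAddCommGroup X] [NormedSpace 𝕜 X]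

theorem StrongDual.continuous_comp_toWeakSpace_symm (f : StrongDual 𝕜 X) :
    Continuous fun z : WeakSpace 𝕜 X => f ((toWeakSpace 𝕜 X).symm z) :=
  WeakBilin.eval_continuous _ f

variable [Nontrivial X]

theorem not_bddAbove_norm_of_dense_toWeakSpace {ι : Type*} {v : ι → X}
    (hv : Dense (range fun i => toWeakSpace 𝕜 X (v i))) : ¬ BddAbove (range fun i => ‖v i‖) := by
  rintro ⟨C, hC⟩
  obtain ⟨p, hp⟩ := NormedSpace.exists_lt_norm 𝕜 X |C|
  obtain ⟨g, hg_norm, hgp⟩ := exists_dual_vector 𝕜 p ((abs_nonneg C).trans_lt hp).ne'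
  have hU : IsOpen {z : WeakSpace 𝕜 X | C < ‖g ((toWeakSpace 𝕜 X).symm z)‖} :=
    isOpen_lt continuous_const g.continuous_comp_toWeakSpace_symm.norm
  obtain ⟨_, ⟨i, rfl⟩, hi⟩ := hv.exists_mem_open hU
    ⟨toWeakSpace 𝕜 X p, by simpa [hgp] using (le_abs_self C).trans_lt hp⟩
  have hgv : ‖g (v i)‖ ≤ ‖v i‖ := by simpa [hg_norm] using g.le_opNorm (v i)
  exact (hi.trans_le hgv).not_ge (hC ⟨i, rfl⟩)

theorem frequently_norm_apply_lt_one_of_dense_toWeakSpace {v : ℕ → X}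
    (hv : Dense (range fun n => toWeakSpace 𝕜 X (v n))) (f : StrongDual 𝕜 X) :
    ∃ᶠ n in atTop, ‖f (v n)‖ < 1 := by
  have : Nontrivial (WeakSpace 𝕜 X) := ‹Nontrivial X›
  have : ∀ z : WeakSpace 𝕜 X, (𝓝[≠] z).NeBot := Module.punctured_nhds_neBot 𝕜 _
  rw [frequently_atTop]
  intro N
  have htail := hv.sdiff_finite ((finite_Iio N).image fun n => toWeakSpace 𝕜 X (v n))
  have hU : IsOpen {z : WeakSpace 𝕜 X | ‖f ((toWeakSpace 𝕜 X).symm z)‖ < 1} :=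
    isOpen_lt f.continuous_comp_toWeakSpace_symm.norm continuous_const
  obtain ⟨_, hn, ⟨n, rfl⟩, hnN⟩ := htail.inter_open_nonempty _ hU ⟨0, by simp⟩
  exact ⟨n, not_lt.1 fun h => hnN ⟨n, h, rfl⟩, hn⟩

end WeakTopology

theorem sphere_subset_closedBall_sdiff_ball {α : Type*} [PseudoMetricSpace α] (x : α)
    {r ρ R : ℝ} (hrρ : r ≤ ρ) (hρR : ρ ≤ R) : sphere x ρ ⊆ closedBall x R \ ball x r :=
  fun _ hz => ⟨(mem_sphere.1 hz).le.trans hρR,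
    fun h => (mem_ball.1 h).not_ge (hrρ.trans_eq (mem_sphere.1 hz).symm)⟩

theorem ContinuousLinearMap.map_circleIntegral {E F : Type*} [NormedAddCommGroup E]
    [NormedSpace ℂ E] [CompleteSpace E] [NormedAddCommGroup F] [NormedSpace ℂ F] [CompleteSpace F]
    (L : E →L[ℂ] F) {f : ℂ → E} {c : ℂ} {R : ℝ} (hf : CircleIntegrable f c R) :
    L (∮ z in C(c, R), f z) = ∮ z in C(c, R), L (f z) := by
  simp only [circleIntegral, ← L.map_smul]
  exact (L.intervalIntegral_comp_comm hf.out).symm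

theorem circleIntegral_zpow_neg_sub_one (n : ℤ) :
    (∮ z in C(0, 1), z ^ (-n - 1)) = if n = 0 then 2 * π * I else 0 := by
  split_ifs with hn
  · subst hn
    simpa using circleIntegral.integral_sub_center_inv (0 : ℂ) one_ne_zero
  · simpa using circleIntegral.integral_sub_zpow_of_ne (by omega : -n - 1 ≠ -1) 0 0 1

namespace spectrum

variable {A : Type*} [NormedRing A] [NormedAlgebra ℂ A] {a : A}

theorem mul_resolvent {z : ℂ} (hz : z ∈ resolventSet ℂ a) :
    a * resolvent a z = z • resolvent a z - 1 := by
  have h : (algebraMap ℂ A z - a) * resolvent a z = 1 := Ring.mul_inverse_cancel _ hz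
  rw [sub_mul, ← Algebra.smul_def] at h
  rw [← h, sub_sub_cancel]

theorem resolvent_mul {z : ℂ} (hz : z ∈ resolventSet ℂ a) :
    resolvent a z * a = z • resolvent a z - 1 := by
  have h : resolvent a z * (algebraMap ℂ A z - a) = 1 := Ring.inverse_mul_cancel _ hz
  rw [mul_sub, ← Algebra.commutes, ← Algebra.smul_def] at h
  rw [← h, sub_sub_cancel]

variable [CompleteSpace A]

theorem differentiableAt_zpow_smul_resolvent (m : ℤ) {z : ℂ} (hz0 : z ≠ 0)
    (hz : z ∈ resolventSet ℂ a) :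
    DifferentiableAt ℂ (fun w => w ^ m • resolvent a w) z :=
  (differentiableAt_zpow.2 (Or.inl hz0)).smul
    (hasDerivAt_resolvent_const_left hz).differentiableAt

theorem continuousOn_zpow_smul_resolvent (m : ℤ) {s : Set ℂ} (hs : s ⊆ resolventSet ℂ a)
    (hs0 : (0 : ℂ) ∉ s) : ContinuousOn (fun w => w ^ m • resolvent a w) s := fun _ hz =>
  (differentiableAt_zpow_smul_resolvent m (ne_of_mem_of_not_mem hz hs0)
    (hs hz)).continuousAt.continuousWithinAt

end spectrum

open spectrum

section LaurentCoeff

variable {A : Type*} [NormedRing A] [NormedAlgebra ℂ A] [CompleteSpace A] (a : A)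

/-- On an annulus `r ≤ ‖z‖ ≤ R` with `r ≤ 1 ≤ R` inside the resolvent set, these are the Laurent
coefficients of `z ↦ (z - a)⁻¹`; `resolventLaurentCoeff a (-1)` is the Riesz projection onto the
part of the spectrum inside the unit disc. -/
noncomputable def resolventLaurentCoeff (n : ℤ) : A :=
  (2 * π * I)⁻¹ • ∮ z in C(0, 1), z ^ (-n - 1) • resolvent a z

variable {a}

theorem map_resolventLaurentCoeff (h : sphere (0 : ℂ) 1 ⊆ resolventSet ℂ a) (L : A →L[ℂ] A)
    (hL : ∀ z ∈ resolventSet ℂ a, L (resolvent a z) = z • resolvent a z - 1) (n : ℤ) :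
    L (resolventLaurentCoeff a n) =
      resolventLaurentCoeff a (n - 1) - if n = 0 then 1 else 0 := by
  have hint : ∀ m : ℤ, CircleIntegrable (fun z => z ^ m • resolvent a z) 0 1 := fun m =>
    (continuousOn_zpow_smul_resolvent m h (by simp)).circleIntegrable zero_le_one
  have hint' : CircleIntegrable (fun z : ℂ => z ^ (-n - 1) • (1 : A)) 0 1 :=
    (((continuousOn_zpow₀ _).smul continuousOn_const).mono (by simp)).circleIntegrable
      zero_le_one
  rw [resolventLaurentCoeff, L.map_smul, L.map_circleIntegral (hint _)]
  have hL' : ∀ z ∈ sphere (0 : ℂ) 1, L (z ^ (-n - 1) • resolvent a z) =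
      z ^ (-(n - 1) - 1) • resolvent a z - z ^ (-n - 1) • (1 : A) := by
    intro z hz
    have hz0 : z ≠ 0 := ne_of_mem_of_not_mem hz (by simp)
    rw [L.map_smul, hL z (h hz), smul_sub, smul_smul, ← zpow_add_one₀ hz0,
      show -n - 1 + 1 = -(n - 1) - 1 by ring]
  rw [circleIntegral.integral_congr zero_le_one hL', circleIntegral.integral_sub (hint _) hint',
    circleIntegral.integral_smul_const, circleIntegral_zpow_neg_sub_one, smul_sub,
    resolventLaurentCoeff]
  split_ifs
  · rw [smul_smul, inv_mul_cancel₀ two_pi_I_ne_zero, one_smul]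
  · rw [zero_smul, smul_zero]

theorem mul_resolventLaurentCoeff (h : sphere (0 : ℂ) 1 ⊆ resolventSet ℂ a) (n : ℤ) :
    a * resolventLaurentCoeff a n = resolventLaurentCoeff a (n - 1) - if n = 0 then 1 else 0 :=
  map_resolventLaurentCoeff h (.mul ℂ A a) (fun _ => mul_resolvent) n

theorem resolventLaurentCoeff_mul (h : sphere (0 : ℂ) 1 ⊆ resolventSet ℂ a) (n : ℤ) :
    resolventLaurentCoeff a n * a = resolventLaurentCoeff a (n - 1) - if n = 0 then 1 else 0 :=
  map_resolventLaurentCoeff h ((ContinuousLinearMap.mul ℂ A).flip a) (fun _ => resolvent_mul) n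

theorem pow_mul_resolventLaurentCoeff_neg_one (h : sphere (0 : ℂ) 1 ⊆ resolventSet ℂ a)
    (k : ℕ) :
    a ^ k * resolventLaurentCoeff a (-1) = resolventLaurentCoeff a (-1 - k) := by
  induction k with
  | zero => simp
  | succ k ih =>
    rw [pow_succ', mul_assoc, ih, mul_resolventLaurentCoeff h, if_neg (by omega), sub_zero]
    congr 1
    push_cast
    ring

theorem resolventLaurentCoeff_natCast_mul_pow (h : sphere (0 : ℂ) 1 ⊆ resolventSet ℂ a)
    (k : ℕ) :
    resolventLaurentCoeff a k * a ^ k = resolventLaurentCoeff a 0 := by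
  induction k with
  | zero => simp
  | succ k ih =>
    rw [pow_succ', ← mul_assoc, Nat.cast_succ, resolventLaurentCoeff_mul h, if_neg (by omega),
      sub_zero, add_sub_cancel_right, ih]

section Annulus

variable {r R : ℝ} (hr : 0 < r) (hann : closedBall (0 : ℂ) R \ ball 0 r ⊆ resolventSet ℂ a)
include hr hann

theorem circleIntegral_zpow_smul_resolvent_eq (m : ℤ) {ρ₁ ρ₂ : ℝ} (hρ₁ : r ≤ ρ₁)
    (hρ₁₂ : ρ₁ ≤ ρ₂) (hρ₂ : ρ₂ ≤ R) :
    (∮ z in C(0, ρ₂), z ^ m • resolvent a z) = ∮ z in C(0, ρ₁), z ^ m • resolvent a z := by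
  have hsub : closedBall (0 : ℂ) ρ₂ \ ball 0 ρ₁ ⊆ closedBall 0 R \ ball 0 r :=
    sdiff_subset_sdiff (closedBall_subset_closedBall hρ₂) (ball_subset_ball hρ₁)
  have h0 : (0 : ℂ) ∉ closedBall 0 ρ₂ \ ball 0 ρ₁ := fun h =>
    h.2 (mem_ball_self (hr.trans_le hρ₁))
  refine Complex.circleIntegral_eq_of_differentiable_on_annulus_off_countable
    (hr.trans_le hρ₁) hρ₁₂ countable_empty
    (continuousOn_zpow_smul_resolvent m (hsub.trans hann) h0) fun z hz => ?_
  have hz' : z ∈ closedBall (0 : ℂ) ρ₂ \ ball 0 ρ₁ :=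
    ⟨ball_subset_closedBall hz.1.1, fun h => hz.1.2 (ball_subset_closedBall h)⟩
  exact differentiableAt_zpow_smul_resolvent m (ne_of_mem_of_not_mem hz' h0) (hann (hsub hz'))

theorem resolventLaurentCoeff_eq_circleIntegral (hr1 : r ≤ 1) (h1R : 1 ≤ R) (n : ℤ) {ρ : ℝ}
    (hrρ : r ≤ ρ) (hρR : ρ ≤ R) :
    resolventLaurentCoeff a n =
      (2 * π * I)⁻¹ • ∮ z in C(0, ρ), z ^ (-n - 1) • resolvent a z := by
  rw [resolventLaurentCoeff]
  rcases le_total ρ 1 with hρ | hρ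
  · rw [circleIntegral_zpow_smul_resolvent_eq hr hann _ hrρ hρ h1R]
  · rw [circleIntegral_zpow_smul_resolvent_eq hr hann _ hr1 hρ hρR]

theorem exists_norm_resolventLaurentCoeff_le (hr1 : r ≤ 1) (h1R : 1 ≤ R) {ρ : ℝ}
    (hrρ : r ≤ ρ) (hρR : ρ ≤ R) :
    ∃ C > 0, ∀ n : ℤ, ‖resolventLaurentCoeff a n‖ ≤ C * ρ ^ (-n) := by
  have hρ : 0 < ρ := hr.trans_le hrρ
  have hsphere := (sphere_subset_closedBall_sdiff_ball 0 hrρ hρR).trans hann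
  obtain ⟨C, hC⟩ := (isCompact_sphere (0 : ℂ) ρ).exists_bound_of_continuousOn
    fun z hz => (hasDerivAt_resolvent_const_left (hsphere hz)).continuousAt.continuousWithinAt
  refine ⟨max C 1, by positivity, fun n => ?_⟩
  rw [resolventLaurentCoeff_eq_circleIntegral hr hann hr1 h1R n hrρ hρR]
  refine (circleIntegral.norm_two_pi_i_inv_smul_integral_le_of_norm_le_const hρ.le
    (C := ρ ^ (-n - 1) * max C 1) fun z hz => ?_).trans_eq ?_
  · rw [norm_smul, norm_zpow, mem_sphere_zero_iff_norm.1 hz]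
    exact mul_le_mul_of_nonneg_left ((hC z hz).trans (le_max_left C 1)) (by positivity)
  · rw [← mul_assoc, mul_comm, ← zpow_one_add₀ hρ.ne', show 1 + (-n - 1) = -n by ring]

theorem exists_norm_pow_mul_resolventLaurentCoeff_neg_one_le (hr1 : r ≤ 1) (h1R : 1 ≤ R) :
    ∃ C > 0, ∀ n : ℕ, ‖a ^ n * resolventLaurentCoeff a (-1)‖ ≤ C * r ^ n := by
  have hsph := (sphere_subset_closedBall_sdiff_ball 0 hr1 h1R).trans hann
  obtain ⟨C, hC0, hC⟩ := exists_norm_resolventLaurentCoeff_le hr hann hr1 h1R le_rfl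
    (hr1.trans h1R)
  refine ⟨C * r, by positivity, fun n => ?_⟩
  rw [pow_mul_resolventLaurentCoeff_neg_one hsph]
  convert hC (-1 - n) using 1
  rw [show -(-1 - n : ℤ) = (n + 1 : ℕ) by push_cast; ring, zpow_natCast, pow_succ']
  ring

end Annulus

theorem exists_annulus_subset_resolventSet (h : ∀ z ∈ spectrum ℂ a, ‖z‖ ≠ 1) :
    ∃ r R : ℝ, 0 < r ∧ r < 1 ∧ 1 < R ∧ closedBall (0 : ℂ) R \ ball 0 r ⊆ resolventSet ℂ a := by
  have hK : IsClosed (norm '' spectrum ℂ a) :=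
    ((spectrum.isCompact a).image continuous_norm).isClosed
  obtain ⟨ε, hε, hball⟩ := Metric.isOpen_iff.1 hK.isOpen_compl 1 fun ⟨z, hz, hz1⟩ => h z hz hz1
  set δ := min (ε / 2) (1 / 2)
  have hδ : 0 < δ := by positivity
  refine ⟨1 - δ, 1 + δ, by linarith [min_le_right (ε / 2) (1 / 2)], by linarith, by linarith,
    fun z ⟨hzR, hzr⟩ => not_not.1 fun hz => hball ?_ ⟨z, hz, rfl⟩⟩
  rw [mem_closedBall_zero_iff] at hzR
  rw [mem_ball_zero_iff, not_lt] at hzr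
  rw [mem_ball, Real.dist_eq, abs_lt]
  constructor <;> linarith [min_le_left (ε / 2) (1 / 2)]

end LaurentCoeff

section Orbit

variable {X : Type*} [NormedAddCommGroup X] [NormedSpace ℂ X] [CompleteSpace X] {T : X →L[ℂ] X}
  {r R : ℝ} (hr : 0 < r) (hann : closedBall (0 : ℂ) R \ ball 0 r ⊆ resolventSet ℂ T)
include hr hann

theorem exists_mul_pow_le_norm_pow_apply (hr1 : r ≤ 1) (h1R : 1 ≤ R) {y : X}
    (hy : resolventLaurentCoeff T 0 y ≠ 0) : ∃ b > 0, ∀ n : ℕ, b * R ^ n ≤ ‖(T ^ n) y‖ := by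
  have hsph := (sphere_subset_closedBall_sdiff_ball 0 hr1 h1R).trans hann
  obtain ⟨C, hC0, hC⟩ := exists_norm_resolventLaurentCoeff_le hr hann hr1 h1R (hr1.trans h1R)
    le_rfl
  refine ⟨‖resolventLaurentCoeff T 0 y‖ / C, div_pos (norm_pos_iff.2 hy) hC0, fun n => ?_⟩
  have h : ‖resolventLaurentCoeff T 0 y‖ ≤ C * (R ^ n)⁻¹ * ‖(T ^ n) y‖ :=
    calc ‖resolventLaurentCoeff T 0 y‖ = ‖resolventLaurentCoeff T n ((T ^ n) y)‖ := by
          rw [← resolventLaurentCoeff_natCast_mul_pow hsph n]; rfl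
      _ ≤ C * (R ^ n)⁻¹ * ‖(T ^ n) y‖ := (ContinuousLinearMap.le_opNorm _ _).trans
          (mul_le_mul_of_nonneg_right (by simpa using hC n) (norm_nonneg _))
  have hRn : 0 < R ^ n := pow_pos (zero_lt_one.trans_le h1R) n
  rw [div_mul_eq_mul_div, div_le_iff₀ hC0]
  calc ‖resolventLaurentCoeff T 0 y‖ * R ^ n ≤ C * (R ^ n)⁻¹ * ‖(T ^ n) y‖ * R ^ n := by gcongr
    _ = ‖(T ^ n) y‖ * C := by field_simp

theorem bddAbove_norm_pow_apply_or_eventually_geometric (hr1 : r < 1) (h1R : 1 < R) (x : X) :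
    BddAbove (range fun n => ‖(T ^ n) x‖) ∨
      ∃ b > 0, ∀ᶠ n in atTop, b * R ^ n ≤ ‖(T ^ n) x‖ := by
  have hsph := (sphere_subset_closedBall_sdiff_ball 0 hr1.le h1R.le).trans hann
  set P := resolventLaurentCoeff T (-1)
  obtain ⟨C, hC0, hC⟩ := exists_norm_pow_mul_resolventLaurentCoeff_neg_one_le hr hann hr1.le h1R.le
  have hdecay : ∀ (n : ℕ) (u : X), ‖(T ^ n) (P u)‖ ≤ C * r ^ n * ‖u‖ := fun n u =>
    (ContinuousLinearMap.le_opNorm (T ^ n * P) u).trans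
      (mul_le_mul_of_nonneg_right (hC n) (norm_nonneg u))
  set y := x - P x
  have hx : ∀ n, (T ^ n) x = (T ^ n) (P x) + (T ^ n) y := fun n => by
    rw [← map_add, add_sub_cancel]
  by_cases hy : resolventLaurentCoeff T 0 y = 0
  · have hPy : P y = y := by
      have h := congr($(mul_resolventLaurentCoeff hsph 0) y)
      exact sub_eq_zero.1 (by simpa [hy] using h.symm)
    refine .inl ⟨C * (‖x‖ + ‖y‖), forall_mem_range.2 fun n => ?_⟩
    calc ‖(T ^ n) x‖ ≤ ‖(T ^ n) (P x)‖ + ‖(T ^ n) y‖ := hx n ▸ norm_add_le _ _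
      _ ≤ C * r ^ n * ‖x‖ + C * r ^ n * ‖y‖ :=
          add_le_add (hdecay n x) (by simpa only [hPy] using hdecay n y)
      _ ≤ C * (‖x‖ + ‖y‖) := by
          rw [← mul_add]
          gcongr
          exact mul_le_of_le_one_right hC0.le (pow_le_one₀ hr.le hr1.le)
  · obtain ⟨b, hb, hgrow⟩ := exists_mul_pow_le_norm_pow_apply hr hann hr1.le h1R.le hy
    have hsmall : ∀ᶠ n in atTop, C * r ^ n * ‖x‖ ≤ b / 2 := by
      have h : Tendsto (fun n => C * r ^ n * ‖x‖) atTop (𝓝 0) := by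
        simpa using ((tendsto_pow_atTop_nhds_zero_of_lt_one hr.le hr1).const_mul C).mul_const ‖x‖
      exact h.eventually (ge_mem_nhds (half_pos hb))
    refine .inr ⟨b / 2, half_pos hb, hsmall.mono fun n hn => ?_⟩
    have hRn : 1 ≤ R ^ n := one_le_pow₀ h1R.le
    calc b / 2 * R ^ n ≤ b * R ^ n - b / 2 := by nlinarith
      _ ≤ ‖(T ^ n) y‖ - ‖(T ^ n) (P x)‖ := sub_le_sub (hgrow n) ((hdecay n x).trans hn)
      _ ≤ ‖(T ^ n) x‖ := by
          rw [hx n]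
          simpa [add_comm] using norm_sub_norm_le ((T ^ n) y) (-(T ^ n) (P x))

end Orbit

/-- If `T` is a weakly hypercyclic bounded operator on a nonzero complex Banach space `X`,
then the spectrum `σ(T)` contains a point of the unit circle. -/
theorem stmt_9 {X : Type*} [NormedAddCommGroup X] [NormedSpace ℂ X] [CompleteSpace X]
    [Nontrivial X] (T : X →L[ℂ] X)
    (hT : ∃ x : X, Dense (Set.range fun n : ℕ => toWeakSpace ℂ X ((T ^ n) x))) :
    ∃ z ∈ spectrum ℂ T, ‖z‖ = 1 := by
  obtain ⟨x, hx⟩ := hT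
  by_contra! hcircle
  obtain ⟨r, R, hr, hr1, h1R, hann⟩ := exists_annulus_subset_resolventSet hcircle
  rcases bddAbove_norm_pow_apply_or_eventually_geometric hr hann hr1 h1R x with
    hbdd | ⟨b, hb, hgrow⟩
  · exact not_bddAbove_norm_of_dense_toWeakSpace hx hbdd
  · obtain ⟨f, hf⟩ := exists_eventually_one_le_norm_apply (𝕜 := ℂ)
      (hgrow.mono fun n hn => norm_pos_iff.1 (lt_of_lt_of_le (by positivity) hn))
      (summable_inv_sqrt_norm_of_geometric hb h1R hgrow)
    obtain ⟨n, hlt, hge⟩ :=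
      ((frequently_norm_apply_lt_one_of_dense_toWeakSpace hx f).and_eventually hf).exists
    exact hlt.not_ge hge
end

section
/- Let X be a nonzero complex Banach space and let T be an invertible bounded linear operator on X (with bounded inverse S = T⁻¹) such that the spectral radius of S satisfies r(S) < 1. Then T is not weakly hypercyclic: for every x ∈ X, the orbit {T^n x : n ≥ 0} is not dense in X for the weak topology. -/
/-!
Since `r(T⁻¹) < 1`, Gelfand's formula gives `m ≥ 1` with `‖T⁻ᵐ‖ ≤ 1/3`, so along each residue
class `n ≡ j (mod m)` the orbit of `x ≠ 0` grows at least like `3 ^ (n / m)`. For a sequence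
`y` with `‖y n‖ ≥ 3 ^ n δ` one builds a functional `f = ∑ ± 3⁻ⁿ hₙ`, where `hₙ` norms `y n` and
the signs are chosen greedily; the `n`-th term then dominates the tail, so `|f (y n)| ≥ δ / 2`.
Hence `0` lies outside the weak closure of each of the `m` pieces of the orbit, and so outside
the weak closure of the whole orbit.
-/

open Filter Topology

theorem norm_le_max_norm_add_norm_sub {V : Type*} [SeminormedAddCommGroup V] [NormedSpace ℝ V]
    (a b : V) : ‖b‖ ≤ max ‖a + b‖ ‖a - b‖ := by
  have : ‖(2 : ℝ) • b‖ ≤ ‖a + b‖ + ‖a - b‖ := by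
    simpa [two_smul, add_sub_sub_cancel] using norm_sub_le (a + b) (a - b)
  rw [norm_smul, Real.norm_two] at this
  linarith [le_max_left ‖a + b‖ ‖a - b‖, le_max_right ‖a + b‖ ‖a - b‖]

theorem exists_signed_partial_sums {G V : Type*} [SeminormedAddCommGroup G]
    [SeminormedAddCommGroup V] [NormedSpace ℝ V] (b : ℕ → G) (L : ℕ → G →+ V) :
    ∃ s : ℕ → G, ∀ n, dist (s n) (s (n + 1)) = ‖b n‖ ∧
      ‖L n (b n)‖ ≤ ‖L n (s (n + 1))‖ := by
  let step (n : ℕ) (g : G) : G :=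
    if ‖L n (g - b n)‖ ≤ ‖L n (g + b n)‖ then g + b n else g - b n
  refine ⟨fun n => Nat.rec 0 step n, fun n => ?_⟩
  set g : G := Nat.rec 0 step n
  have hmax := norm_le_max_norm_add_norm_sub (L n g) (L n (b n))
  rw [← map_add, ← map_sub] at hmax
  change dist g (step n g) = ‖b n‖ ∧ ‖L n (b n)‖ ≤ ‖L n (step n g)‖
  simp only [step]
  split_ifs with h
  · exact ⟨by simp, hmax.trans (max_eq_left h).le⟩
  · exact ⟨by simp, hmax.trans (max_eq_right (not_le.mp h).le).le⟩

section WeakTopology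

variable {𝕜 E : Type*} [RCLike 𝕜] [NormedAddCommGroup E] [NormedSpace 𝕜 E]

theorem exists_strongDual_half_le_norm_apply {y : ℕ → E} {δ : ℝ}
    (hy : ∀ n, 3 ^ n * δ ≤ ‖y n‖) : ∃ f : StrongDual 𝕜 E, ∀ n, δ / 2 ≤ ‖f (y n)‖ := by
  choose h hh_norm hh_apply using fun n => exists_dual_vector'' 𝕜 (y n)
  obtain ⟨s, hs_step⟩ := exists_signed_partial_sums (fun n => (3⁻¹ : 𝕜) ^ n • h n)
    (fun n => (ContinuousLinearMap.apply 𝕜 𝕜 (y n)).toLinearMap.toAddMonoidHom)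
  have hs : ∀ n, dist (s n) (s (n + 1)) ≤ 1 * 3⁻¹ ^ n := fun n => by
    rw [(hs_step n).1, norm_smul, norm_pow, norm_inv, RCLike.norm_ofNat, one_mul]
    exact mul_le_of_le_one_right (by positivity) (hh_norm n)
  obtain ⟨f, hf⟩ := cauchySeq_tendsto_of_complete (cauchySeq_of_le_geometric _ _ (by norm_num) hs)
  refine ⟨f, fun n => ?_⟩
  have head : (3⁻¹ : ℝ) ^ n * ‖y n‖ ≤ ‖s (n + 1) (y n)‖ := by
    simpa [hh_apply, norm_smul] using (hs_step n).2
  have tail : ‖(s (n + 1) - f) (y n)‖ ≤ (3⁻¹ : ℝ) ^ n / 2 * ‖y n‖ := by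
    refine ((s (n + 1) - f).le_opNorm (y n)).trans (mul_le_mul_of_nonneg_right ?_ (norm_nonneg _))
    have := dist_le_of_le_geometric_of_tendsto _ _ (by norm_num) hs hf (n + 1)
    rw [dist_eq_norm] at this
    exact this.trans_eq (by rw [pow_succ]; ring)
  have hδ : δ ≤ (3⁻¹ : ℝ) ^ n * ‖y n‖ := by
    rw [inv_pow, inv_mul_eq_div, le_div_iff₀' (by positivity)]
    exact hy n
  rw [sub_apply] at tail
  linarith [norm_sub_norm_le (s (n + 1) (y n)) (f (y n))]

theorem zero_notMem_closure_range_toWeakSpace {y : ℕ → E} {δ : ℝ} (hδ : 0 < δ)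
    (hy : ∀ n, 3 ^ n * δ ≤ ‖y n‖) :
    (0 : WeakSpace 𝕜 E) ∉ closure (Set.range fun n => toWeakSpace 𝕜 E (y n)) := by
  obtain ⟨f, hf⟩ := exists_strongDual_half_le_norm_apply (𝕜 := 𝕜) hy
  have hcont : Continuous fun w : WeakSpace 𝕜 E => f ((toWeakSpace 𝕜 E).symm w) :=
    WeakBilin.eval_continuous _ f
  rw [mem_closure_iff]
  push Not
  refine ⟨{w | ‖f ((toWeakSpace 𝕜 E).symm w)‖ < δ / 2}, isOpen_lt hcont.norm continuous_const,
    by simpa using half_pos hδ, Set.eq_empty_of_forall_notMem ?_⟩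
  rintro _ ⟨hlt, n, rfl⟩
  exact (hf n).not_gt (by simpa using hlt)

end WeakTopology

theorem spectrum.tendsto_norm_pow_of_spectralRadius_lt_one {A : Type*} [NormedRing A]
    [NormedAlgebra ℂ A] [CompleteSpace A] {a : A} (ha : spectralRadius ℂ a < 1) :
    Tendsto (fun n => ‖a ^ n‖) atTop (𝓝 0) := by
  obtain ⟨ρ, hρa, hρ1⟩ := ENNReal.lt_iff_exists_nnreal_btwn.mp ha
  refine squeeze_zero' (Eventually.of_forall fun n => norm_nonneg _) ?_
    (tendsto_pow_atTop_nhds_zero_of_lt_one ρ.2 (by exact_mod_cast hρ1))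
  filter_upwards [(spectrum.pow_nnnorm_pow_one_div_tendsto_nhds_spectralRadius a).eventually_lt_const
    hρa, eventually_gt_atTop 0] with n hn hn0
  rw [one_div, ENNReal.rpow_inv_lt_iff (by positivity), ENNReal.rpow_natCast] at hn
  exact_mod_cast hn.le

section Automorphism

variable {𝕜 E : Type*} [NontriviallyNormedField 𝕜] [NormedAddCommGroup E] [NormedSpace 𝕜 E]

theorem ContinuousLinearEquiv.norm_le_norm_symm_pow_mul_norm_pow_apply (T : E ≃L[𝕜] E)
    (n : ℕ) (z : E) : ‖z‖ ≤ ‖(T.symm : E →L[𝕜] E) ^ n‖ * ‖((T : E →L[𝕜] E) ^ n) z‖ := by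
  have hST : (T.symm : E →L[𝕜] E) * T = 1 := by ext; simp
  have hTS : (T : E →L[𝕜] E) * T.symm = 1 := by ext; simp
  have hcomm : Commute (T.symm : E →L[𝕜] E) T := hST.trans hTS.symm
  have hinv : ((T.symm : E →L[𝕜] E) ^ n) (((T : E →L[𝕜] E) ^ n) z) = z := by
    rw [← mul_apply_eq_comp, ← hcomm.mul_pow, hST, one_pow, one_apply_eq_self]
  calc ‖z‖ = ‖((T.symm : E →L[𝕜] E) ^ n) (((T : E →L[𝕜] E) ^ n) z)‖ := by rw [hinv]
    _ ≤ _ := ContinuousLinearMap.le_opNorm _ _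

theorem ContinuousLinearEquiv.pow_mul_norm_le_norm_pow_apply [Nontrivial E] (T : E ≃L[𝕜] E)
    {m : ℕ} {c : ℝ} (hc : 0 < c) (hm : ‖(T.symm : E →L[𝕜] E) ^ m‖ ≤ c⁻¹) (q : ℕ) (z : E) :
    c ^ q * ‖z‖ ≤ ‖((T : E →L[𝕜] E) ^ (m * q)) z‖ := by
  have hSq : ‖(T.symm : E →L[𝕜] E) ^ (m * q)‖ ≤ (c ^ q)⁻¹ := by
    rw [pow_mul, ← inv_pow]
    exact (norm_pow_le _ q).trans (pow_le_pow_left₀ (norm_nonneg _) hm q)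
  calc c ^ q * ‖z‖ ≤ c ^ q * ((c ^ q)⁻¹ * ‖((T : E →L[𝕜] E) ^ (m * q)) z‖) := by
        gcongr
        exact (T.norm_le_norm_symm_pow_mul_norm_pow_apply _ z).trans
          (mul_le_mul_of_nonneg_right hSq (norm_nonneg _))
    _ = ‖((T : E →L[𝕜] E) ^ (m * q)) z‖ := by field_simp

end Automorphism

theorem Set.range_eq_iUnion_range_mul_add {α : Type*} (f : ℕ → α) {m : ℕ} (hm : 0 < m) :
    Set.range f = ⋃ j : Fin m, Set.range fun q => f (m * q + j) := by
  ext w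
  simp only [Set.mem_range, Set.mem_iUnion]
  constructor
  · rintro ⟨n, rfl⟩
    exact ⟨⟨n % m, Nat.mod_lt n hm⟩, n / m, by rw [Nat.div_add_mod]⟩
  · rintro ⟨j, q, rfl⟩
    exact ⟨_, rfl⟩

/-- Let `T` be an invertible bounded operator (a continuous linear equivalence) on a nonzero
complex Banach space `X` whose (bounded) inverse `S = T⁻¹` has spectral radius `r(S) < 1`.
Then `T` is not weakly hypercyclic: no orbit `{T ^ n x : n ≥ 0}` is weakly dense. -/
theorem stmt_13 {X : Type*} [NormedAddCommGroup X] [NormedSpace ℂ X] [CompleteSpace X]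
    [Nontrivial X] (T : X ≃L[ℂ] X)
    (hS : spectralRadius ℂ (T.symm : X →L[ℂ] X) < 1) :
    ∀ x : X,
      ¬ Dense (Set.range fun n : ℕ => toWeakSpace ℂ X (((T : X →L[ℂ] X) ^ n) x)) := by
  intro x hdense
  rcases eq_or_ne x 0 with rfl | hx
  · obtain ⟨v, hv⟩ := exists_ne (0 : X)
    have hv0 := hdense.closure_eq ▸ Set.mem_univ (toWeakSpace ℂ X v)
    exact hv (by simpa using hv0)
  obtain ⟨m, hm, hm0⟩ : ∃ m, ‖(T.symm : X →L[ℂ] X) ^ m‖ ≤ 3⁻¹ ∧ 0 < m :=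
    (((spectrum.tendsto_norm_pow_of_spectralRadius_lt_one hS).eventually
      (ge_mem_nhds (by norm_num))).and (eventually_gt_atTop 0)).exists
  have hgrowth (j q : ℕ) :
      3 ^ q * ‖((T : X →L[ℂ] X) ^ j) x‖ ≤ ‖((T : X →L[ℂ] X) ^ (m * q + j)) x‖ := by
    rw [pow_add, mul_apply_eq_comp]
    exact T.pow_mul_norm_le_norm_pow_apply three_pos hm q _
  have hne (j : ℕ) : ((T : X →L[ℂ] X) ^ j) x ≠ 0 := fun h0 =>
    hx (norm_le_zero_iff.mp (by simpa [h0] using T.norm_le_norm_symm_pow_mul_norm_pow_apply j x))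
  have h0 := hdense.closure_eq ▸ Set.mem_univ (0 : WeakSpace ℂ X)
  rw [Set.range_eq_iUnion_range_mul_add _ hm0, closure_iUnion_of_finite, Set.mem_iUnion] at h0
  obtain ⟨j, hj⟩ := h0
  exact zero_notMem_closure_range_toWeakSpace (norm_pos_iff.mpr (hne j)) (hgrowth j) hj
end

section
/- Let X be a Banach space, let Y be a norming subspace of X*, i.e. a closed linear subspace Y ⊆ X* for which there exists C > 0 such that ‖x‖ ≤ C · sup{ |f(x)| : f ∈ Y, ‖f‖ ≤ 1 } for every x ∈ X, let T be a bounded linear operator on X, and let z ∈ X and c > 1 be such that ‖T^n z‖ ≥ c^n for all sufficiently large n. Then the orbit {T^n z : n ≥ 0} is not dense in X for the σ(X, Y) topology, provided X ≠ {0}. -/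
open Topology

/-!
Norming gives, for every `x`, some `g ∈ Y` with `‖g‖ ≤ 1` and `‖x‖ ≤ 2C ‖g x‖`. Pick `d` with
`B := c ^ d > 2C + 1`. Apart from finitely many points, the orbit splits into the `d`
progressions `n = N + j + d m`, along each of which `‖T ^ n z‖ ≥ B ^ m`. For such a sequence
`u m` the gliding hump `f = ∑ ± B⁻¹ ^ m g m ∈ Y`, with signs chosen inductively so that the
`m`-th term does not cancel the partial sum at `u m`, satisfies
`‖f (u m)‖ ≥ B⁻¹ ^ m ‖u m‖ (1 / (2C) - 1 / (B - 1)) ≥ θ > 0`. So finitely many functionals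
from `Y` keep the orbit out of a `σ(X, Y)`-neighbourhood of `0`.
-/

section SignChoice

variable {E : Type*} [NormedAddCommGroup E] [NormedSpace ℝ E]

lemma mul_norm_le_max_norm_add_smul_norm_sub_smul (v w : E) (δ : ℝ) :
    δ * ‖w‖ ≤ max ‖v + δ • w‖ ‖v - δ • w‖ := by
  have h : (2 * δ) • w = (v + δ • w) - (v - δ • w) := by
    rw [two_mul, add_smul]; abel
  have h2 : 2 * (δ * ‖w‖) ≤ ‖v + δ • w‖ + ‖v - δ • w‖ :=
    calc 2 * (δ * ‖w‖) ≤ ‖(2 * δ) • w‖ := by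
          rw [norm_smul, Real.norm_eq_abs, abs_mul, abs_two, mul_assoc]
          gcongr
          exact le_abs_self δ
      _ ≤ ‖v + δ • w‖ + ‖v - δ • w‖ := h ▸ norm_sub_le _ _
  linarith [le_max_left ‖v + δ • w‖ ‖v - δ • w‖, le_max_right ‖v + δ • w‖ ‖v - δ • w‖]

noncomputable def signCoeff (v w : E) (δ : ℝ) : ℝ :=
  if ‖v - δ • w‖ ≤ ‖v + δ • w‖ then δ else -δ

lemma abs_signCoeff (v w : E) (δ : ℝ) : |signCoeff v w δ| = |δ| := by
  unfold signCoeff; split_ifs <;> simp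

lemma mul_norm_le_norm_add_signCoeff_smul (v w : E) (δ : ℝ) :
    δ * ‖w‖ ≤ ‖v + signCoeff v w δ • w‖ := by
  refine (mul_norm_le_max_norm_add_smul_norm_sub_smul v w δ).trans_eq ?_
  unfold signCoeff
  split_ifs with h
  · exact max_eq_left h
  · rw [neg_smul, ← sub_eq_add_neg]; exact max_eq_right (not_le.1 h).le

end SignChoice

section GlidingHump

variable {𝕜 : Type*} [RCLike 𝕜] {X : Type*} [NormedAddCommGroup X] [NormedSpace 𝕜 X]

noncomputable def glidingHumpSum (g : ℕ → X →L[𝕜] 𝕜) (u : ℕ → X) (r : ℝ) :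
    ℕ → X →L[𝕜] 𝕜
  | 0 => 0
  | m + 1 => glidingHumpSum g u r m +
      (signCoeff (glidingHumpSum g u r m (u m)) (g m (u m)) (r ^ m) : 𝕜) • g m

variable (g : ℕ → X →L[𝕜] 𝕜) (u : ℕ → X) (r : ℝ)

lemma glidingHumpSum_mem {Y : Submodule 𝕜 (X →L[𝕜] 𝕜)} (hgY : ∀ m, g m ∈ Y) (m : ℕ) :
    glidingHumpSum g u r m ∈ Y := by
  induction m with
  | zero => exact Y.zero_mem
  | succ m ih => exact Y.add_mem ih (Y.smul_mem _ (hgY m))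

lemma dist_glidingHumpSum_succ_le (hg : ∀ m, ‖g m‖ ≤ 1) (hr : 0 ≤ r) (m : ℕ) :
    dist (glidingHumpSum g u r m) (glidingHumpSum g u r (m + 1)) ≤ 1 * r ^ m := by
  rw [dist_comm, dist_eq_norm, glidingHumpSum, add_sub_cancel_left, norm_smul,
    RCLike.norm_ofReal, abs_signCoeff, abs_of_nonneg (pow_nonneg hr m), one_mul]
  exact mul_le_of_le_one_right (pow_nonneg hr m) (hg m)

lemma mul_norm_apply_le_norm_glidingHumpSum_succ_apply (m : ℕ) :
    r ^ m * ‖g m (u m)‖ ≤ ‖glidingHumpSum g u r (m + 1) (u m)‖ := by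
  rw [glidingHumpSum, add_apply, smul_apply, smul_eq_mul,
    ← RCLike.real_smul_eq_coe_mul]
  exact mul_norm_le_norm_add_signCoeff_smul _ _ _

theorem exists_mem_forall_pow_mul_sub_le_norm_apply {Y : Submodule 𝕜 (X →L[𝕜] 𝕜)}
    (hY : IsClosed (Y : Set (X →L[𝕜] 𝕜))) (hgY : ∀ m, g m ∈ Y) (hg : ∀ m, ‖g m‖ ≤ 1)
    (hr₀ : 0 ≤ r) (hr₁ : r < 1) :
    ∃ f ∈ Y, ∀ m, r ^ m * ‖g m (u m)‖ - r ^ (m + 1) / (1 - r) * ‖u m‖ ≤ ‖f (u m)‖ := by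
  set S := glidingHumpSum g u r
  have hstep := dist_glidingHumpSum_succ_le g u r hg hr₀
  obtain ⟨f, hf⟩ := cauchySeq_tendsto_of_complete (cauchySeq_of_le_geometric r 1 hr₁ hstep)
  refine ⟨f, hY.mem_of_tendsto hf (.of_forall (glidingHumpSum_mem g u r hgY)), fun m => ?_⟩
  have htail : ‖S (m + 1) - f‖ ≤ r ^ (m + 1) / (1 - r) := by
    simpa [dist_eq_norm] using dist_le_of_le_geometric_of_tendsto r 1 hr₁ hstep hf (m + 1)
  calc r ^ m * ‖g m (u m)‖ - r ^ (m + 1) / (1 - r) * ‖u m‖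
      ≤ ‖S (m + 1) (u m)‖ - ‖(S (m + 1) - f) (u m)‖ := by
        gcongr
        · exact mul_norm_apply_le_norm_glidingHumpSum_succ_apply g u r m
        · exact (S (m + 1) - f).le_of_opNorm_le htail _
    _ ≤ ‖S (m + 1) (u m) - (S (m + 1) - f) (u m)‖ := norm_sub_norm_le _ _
    _ = ‖f (u m)‖ := by rw [sub_apply, sub_sub_cancel]

end GlidingHump

section Norming

variable {𝕜 : Type*} [RCLike 𝕜] {X : Type*} [NormedAddCommGroup X] [NormedSpace 𝕜 X]
  {Y : Submodule 𝕜 (X →L[𝕜] 𝕜)}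

lemma exists_mem_norm_le_two_mul_norm_apply {C : ℝ} (hC : 0 < C)
    (hnorm : ∀ x : X,
      ‖x‖ ≤ C * sSup ((fun f : X →L[𝕜] 𝕜 => ‖f x‖) '' {f | f ∈ Y ∧ ‖f‖ ≤ 1}))
    (x : X) : ∃ g ∈ Y, ‖g‖ ≤ 1 ∧ ‖x‖ ≤ 2 * C * ‖g x‖ := by
  rcases eq_or_ne x 0 with rfl | hx
  · exact ⟨0, Y.zero_mem, by simp⟩
  have hlt : ‖x‖ / (2 * C) < sSup ((fun f : X →L[𝕜] 𝕜 => ‖f x‖) '' {f | f ∈ Y ∧ ‖f‖ ≤ 1}) :=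
    calc ‖x‖ / (2 * C) < ‖x‖ / C := by have := norm_pos_iff.2 hx; gcongr; linarith
      _ ≤ _ := by rw [div_le_iff₀' hC]; exact hnorm x
  obtain ⟨_, ⟨g, ⟨hgY, hg⟩, rfl⟩, hgx⟩ :=
    exists_lt_of_lt_csSup (by exact ⟨_, 0, ⟨Y.zero_mem, by simp⟩, rfl⟩) hlt
  exact ⟨g, hgY, hg, ((div_lt_iff₀' (by positivity)).1 hgx).le⟩

theorem exists_mem_pos_le_norm_apply_of_pow_le_norm {K B : ℝ} (hK : 0 < K)
    (hY : IsClosed (Y : Set (X →L[𝕜] 𝕜))) (hA : ∀ x : X, ∃ g ∈ Y, ‖g‖ ≤ 1 ∧ ‖x‖ ≤ K * ‖g x‖)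
    (hB : K + 1 < B) (u : ℕ → X) (hu : ∀ m, B ^ m ≤ ‖u m‖) :
    ∃ f ∈ Y, ∃ θ > 0, ∀ m, θ ≤ ‖f (u m)‖ := by
  choose g hgY hg hgu using fun m => hA (u m)
  have hB₀ : 0 < B := by linarith
  set r := B⁻¹
  have hr₁ : r < 1 := inv_lt_one_of_one_lt₀ (by linarith)
  obtain ⟨f, hfY, hf⟩ :=
    exists_mem_forall_pow_mul_sub_le_norm_apply g u r hY hgY hg (by positivity) hr₁
  have hθ : 0 < 1 / K - r / (1 - r) := by
    have : r * (K + 1) < 1 := by rw [inv_mul_lt_iff₀ hB₀, mul_one]; exact hB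
    rw [sub_pos, div_lt_div_iff₀ (by linarith) hK]
    linarith
  refine ⟨f, hfY, _, hθ, fun m => ?_⟩
  have hum : 1 ≤ r ^ m * ‖u m‖ := by
    rw [inv_pow, inv_mul_eq_div, one_le_div₀ (by positivity)]; exact hu m
  calc 1 / K - r / (1 - r) ≤ r ^ m * ‖u m‖ * (1 / K - r / (1 - r)) :=
        le_mul_of_one_le_left hθ.le hum
    _ = r ^ m * (‖u m‖ / K) - r ^ (m + 1) / (1 - r) * ‖u m‖ := by ring
    _ ≤ r ^ m * ‖g m (u m)‖ - r ^ (m + 1) / (1 - r) * ‖u m‖ := by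
        gcongr; rw [div_le_iff₀' hK]; exact hgu m
    _ ≤ ‖f (u m)‖ := hf m

end Norming

section SigmaTopology

variable {𝕜 : Type*} [RCLike 𝕜] {X : Type*} [NormedAddCommGroup X] [NormedSpace 𝕜 X]
  {Y : Submodule 𝕜 (X →L[𝕜] 𝕜)}

variable (Y) in
abbrev sigmaTopology : TopologicalSpace X :=
  TopologicalSpace.induced (fun (v : X) (f : Y) => (f : X →L[𝕜] 𝕜) v) Pi.topologicalSpace

lemma continuous_sigmaTopology_apply {f : X →L[𝕜] 𝕜} (hf : f ∈ Y) :
    Continuous[sigmaTopology Y, _] fun x => f x := by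
  let := sigmaTopology Y
  exact (continuous_apply (⟨f, hf⟩ : Y)).comp
    (continuous_induced_dom : Continuous fun (v : X) (g : Y) => g.1 v)

lemma zero_notMem_closure_of_le_norm_apply {f : X →L[𝕜] 𝕜} (hf : f ∈ Y) {θ : ℝ} (hθ : 0 < θ)
    {S : Set X} (hS : ∀ x ∈ S, θ ≤ ‖f x‖) : (0 : X) ∉ closure[sigmaTopology Y] S := by
  let := sigmaTopology Y
  have hopen : IsOpen {x : X | ‖f x‖ < θ} :=
    isOpen_lt (continuous_sigmaTopology_apply hf).norm continuous_const
  rw [mem_closure_iff]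
  intro h
  obtain ⟨x, hxθ, hxS⟩ := h _ hopen (by simpa using hθ)
  exact (hS x hxS).not_gt hxθ

lemma zero_notMem_closure_singleton {K : ℝ} (hA : ∀ x : X, ∃ g ∈ Y, ‖g‖ ≤ 1 ∧ ‖x‖ ≤ K * ‖g x‖)
    {x : X} (hx : x ≠ 0) : (0 : X) ∉ closure[sigmaTopology Y] {x} := by
  obtain ⟨g, hgY, -, hgx⟩ := hA x
  have : 0 < ‖g x‖ := by
    by_contra! h
    rw [le_antisymm h (norm_nonneg _), mul_zero, norm_le_zero_iff] at hgx
    exact hx hgx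
  exact zero_notMem_closure_of_le_norm_apply hgY this (fun _ hy => hy ▸ le_rfl)

theorem zero_notMem_closure_range_of_pow_le_norm {K c : ℝ} (hK : 0 < K)
    (hY : IsClosed (Y : Set (X →L[𝕜] 𝕜))) (hA : ∀ x : X, ∃ g ∈ Y, ‖g‖ ≤ 1 ∧ ‖x‖ ≤ K * ‖g x‖)
    (hc : 1 < c) (u : ℕ → X) (hu : ∀ n, c ^ n ≤ ‖u n‖) :
    (0 : X) ∉ closure[sigmaTopology Y] (Set.range u) := by
  let := sigmaTopology Y
  obtain ⟨d, hd⟩ := pow_unbounded_of_one_lt (K + 1) hc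
  have hd₀ : d ≠ 0 := by rintro rfl; linarith [pow_zero c]
  have hsub : Set.range u ⊆ ⋃ j < d, Set.range fun m => u (j + d * m) := by
    rintro _ ⟨n, rfl⟩
    exact Set.mem_iUnion₂.2 ⟨n % d, Nat.mod_lt n (Nat.pos_of_ne_zero hd₀), n / d,
      congrArg u (Nat.mod_add_div n d)⟩
  intro h0
  replace h0 := closure_mono hsub h0
  rw [closure_iUnion₂_lt_nat] at h0
  obtain ⟨j, -, hj⟩ := Set.mem_iUnion₂.1 h0
  obtain ⟨f, hfY, θ, hθ, hf⟩ := exists_mem_pos_le_norm_apply_of_pow_le_norm hK hY hA hd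
    (fun m => u (j + d * m)) fun m => by
      rw [← pow_mul]
      exact (pow_le_pow_right₀ hc.le (Nat.le_add_left _ _)).trans (hu _)
  exact zero_notMem_closure_of_le_norm_apply hfY hθ (by rintro _ ⟨m, rfl⟩; exact hf m) hj

end SigmaTopology

theorem stmt_15_general {𝕜 : Type*} [RCLike 𝕜] {X : Type*} [NormedAddCommGroup X]
    [NormedSpace 𝕜 X]
    (Y : Submodule 𝕜 (X →L[𝕜] 𝕜)) (hYclosed : IsClosed (Y : Set (X →L[𝕜] 𝕜)))
    (hYnorming : ∃ C : ℝ, 0 < C ∧ ∀ x : X,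
      ‖x‖ ≤ C * sSup ((fun f : X →L[𝕜] 𝕜 => ‖f x‖) '' {f | f ∈ Y ∧ ‖f‖ ≤ 1}))
    (T : X →L[𝕜] X) (z : X) {c : ℝ} (hc : 1 < c)
    (hgrowth : ∃ N : ℕ, ∀ n : ℕ, N ≤ n → c ^ n ≤ ‖(T ^ n) z‖) :
    ¬ @Dense X
      (TopologicalSpace.induced (fun (v : X) (f : Y) => (f : X →L[𝕜] 𝕜) v) Pi.topologicalSpace)
      (Set.range fun n : ℕ => (T ^ n) z) := by
  obtain ⟨C, hC, hnorm⟩ := hYnorming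
  obtain ⟨N, hN⟩ := hgrowth
  have hA := exists_mem_norm_le_two_mul_norm_apply hC hnorm
  have horbit : ∀ n, (T ^ n) z ≠ 0 := fun n h => by
    have hzero : (T ^ (N + n)) z = 0 := by
      rw [pow_add]; exact (congrArg (T ^ N) h).trans (map_zero _)
    have := hN (N + n) (Nat.le_add_right N n)
    rw [hzero, norm_zero] at this
    linarith [pow_pos (zero_lt_one.trans hc) (N + n)]
  have hsub : Set.range (fun n => (T ^ n) z) ⊆
      (⋃ n < N, {(T ^ n) z}) ∪ Set.range fun n => (T ^ (N + n)) z := by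
    rintro _ ⟨n, rfl⟩
    rcases lt_or_ge n N with hn | hn
    · exact Or.inl (Set.mem_iUnion₂.2 ⟨n, hn, rfl⟩)
    · exact Or.inr ⟨n - N, congrArg (fun k => (T ^ k) z) (Nat.add_sub_cancel' hn)⟩
  let := sigmaTopology Y
  intro hD
  have h0 := closure_mono hsub (hD.closure_eq.symm ▸ Set.mem_univ (0 : X))
  rw [closure_union, closure_iUnion₂_lt_nat] at h0
  rcases h0 with h0 | h0
  · obtain ⟨n, -, hn⟩ := Set.mem_iUnion₂.1 h0
    exact zero_notMem_closure_singleton hA (horbit n) hn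
  · exact zero_notMem_closure_range_of_pow_le_norm (by positivity) hYclosed hA hc _
      (fun n => (pow_le_pow_right₀ hc.le (Nat.le_add_left n N)).trans
        (hN _ (Nat.le_add_right N n))) h0

/-- Let `X` be a nonzero Banach space over `𝕜 = ℝ` or `ℂ` and `Y` a norming closed subspace of
`X*` (there is `C > 0` with `‖x‖ ≤ C * sup {|f x| : f ∈ Y, ‖f‖ ≤ 1}` for all `x`). Let `T` be a
bounded operator on `X` and `z ∈ X`, `c > 1` with `‖T ^ n z‖ ≥ c ^ n` for all sufficiently
large `n`. Then the orbit `{T ^ n z : n ≥ 0}` is not dense for the `σ(X, Y)` topology (the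
coarsest topology making every `f ∈ Y` continuous). -/
theorem stmt_15 {𝕜 : Type*} [RCLike 𝕜] {X : Type*} [NormedAddCommGroup X]
    [NormedSpace 𝕜 X] [CompleteSpace X] [Nontrivial X]
    (Y : Submodule 𝕜 (X →L[𝕜] 𝕜)) (hYclosed : IsClosed (Y : Set (X →L[𝕜] 𝕜)))
    (hYnorming : ∃ C : ℝ, 0 < C ∧ ∀ x : X,
      ‖x‖ ≤ C * sSup ((fun f : X →L[𝕜] 𝕜 => ‖f x‖) '' {f | f ∈ Y ∧ ‖f‖ ≤ 1}))
    (T : X →L[𝕜] X) (z : X) {c : ℝ} (hc : 1 < c)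
    (hgrowth : ∃ N : ℕ, ∀ n : ℕ, N ≤ n → c ^ n ≤ ‖(T ^ n) z‖) :
    ¬ @Dense X
      (TopologicalSpace.induced (fun (v : X) (f : Y) => (f : X →L[𝕜] 𝕜) v) Pi.topologicalSpace)
      (Set.range fun n : ℕ => (T ^ n) z) :=
  stmt_15_general Y hYclosed hYnorming T z hc hgrowth
end
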